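/- arXiv:1102.0518 — 10 statements merged into one kernel-verified Lean document; each statement's English description precedes it below -/
import Mathlib

section
/- Let a ∈ ℂ. There exists a point x = (x_1,…,x_n) ∈ ℂ^n with x ≠ 0 such that all n partial derivatives ∂F_a/∂x_i vanish at x, if and only if a^{d/γ} · ∏_{i=1}^{k} (β_i w_i)^{β_i w_i/γ} + (−1)^{d/γ − 1} · d^{d/γ} = 0. (This describes the discriminant of the one-parameter family of Calabi–Yau hypersurfaces.) -/
/-!
At a critical point `x ≠ 0` the monomial `P = ∏ xᵢ ^ βᵢ` cannot vanish: otherwise every `∂ⱼF`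
reduces to `eⱼ xⱼ ^ (eⱼ - 1)` with `eⱼ = d / wⱼ`, forcing `x = 0`. Multiplying `∂ᵢF = 0` by `wᵢ xᵢ`
gives `d xᵢ ^ eᵢ = -a βᵢ wᵢ P`; raising these to the powers `βᵢ wᵢ / γ` and multiplying, the `xᵢ`
collapse to `P ^ (d / γ)` (as `eᵢ βᵢ wᵢ / γ = βᵢ d / γ`), leaving
`d ^ (d / γ) = (-a) ^ (d / γ) ∏ (βᵢ wᵢ) ^ (βᵢ wᵢ / γ)`, which is the stated condition.
Conversely, given this identity, any roots of `xᵢ ^ eᵢ = -a βᵢ wᵢ / d` satisfy `P ^ (d / γ) = 1`,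
and multiplying `xᵢ` by `s ^ (uᵢ wᵢ)`, where `s ^ d = 1` and `∑ uᵢ βᵢ wᵢ = γ` (Bézout), turns `P`
into `1` without changing the `xᵢ ^ eᵢ`; the result is a critical point.
-/

open Finset Function

theorem Nat.cast_finset_gcd {ι : Type*} (s : Finset ι) (f : ι → ℕ) :
    ((s.gcd f : ℕ) : ℤ) = s.gcd fun i => (f i : ℤ) := by
  classical
  induction s using Finset.induction with
  | empty => simp
  | insert a s ha ih =>
    rw [gcd_insert, gcd_insert, ← ih, ← Int.coe_gcd, Int.gcd_natCast_natCast]; rfl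

theorem Nat.div_mul_div_eq_mul_div {d w b γ : ℕ} (hw : 0 < w) (hwd : w ∣ d) (hγ : γ ∣ b * w)
    (hγd : γ ∣ d) : d / w * (b * w / γ) = b * (d / γ) := by
  rw [Nat.div_mul_div_comm hwd hγ, ← Nat.mul_div_assoc _ hγd,
    show d * (b * w) = w * (b * d) by ring, Nat.mul_div_mul_left _ _ hw]

theorem natCast_mul_pow_sub_one_mul_self {R : Type*} [CommSemiring R] (m : ℕ) (x : R) :
    (m : R) * x ^ (m - 1) * x = m * x ^ m := by
  cases m with
  | zero => simp
  | succ m => rw [Nat.add_sub_cancel, mul_assoc, ← pow_succ]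

theorem add_neg_one_pow_sub_one_mul_eq_zero_iff {R : Type*} [CommRing R] {N : ℕ} (hN : 0 < N)
    (a b c : R) : a ^ N * b + (-1) ^ (N - 1) * c = 0 ↔ (-a) ^ N * b = c := by
  obtain ⟨M, rfl⟩ := Nat.exists_eq_add_of_lt hN
  have hsq : ((-1 : R) ^ M) ^ 2 = 1 := by rw [← pow_mul, mul_comm, pow_mul, neg_one_sq, one_pow]
  simp only [zero_add, Nat.add_sub_cancel, neg_pow a, pow_succ]
  constructor <;> intro h
  · linear_combination (-(-1 : R) ^ M) * h + c * hsq
  · linear_combination (-(-1 : R) ^ M) * h - a ^ M * a * b * hsq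

theorem two_le_sum_div {ι : Type*} [Fintype ι] [Nontrivial ι] {w : ι → ℕ} (hw : ∀ i, 0 < w i)
    {i : ι} (hi : w i ∣ ∑ j, w j) : 2 ≤ (∑ j, w j) / w i := by
  obtain ⟨j, hj⟩ := exists_ne i
  have hlt : w i < ∑ j, w j :=
    single_lt_sum hj (mem_univ i) (mem_univ j) (hw j) fun _ _ _ => Nat.zero_le _
  obtain ⟨q, hq⟩ := hi
  rw [hq, Nat.mul_div_cancel_left _ (hw i)]
  rw [hq] at hlt
  exact Nat.lt_of_mul_lt_mul_left (a := w i) (by rwa [mul_one])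

variable {ι : Type*} [Fintype ι]

theorem prod_zpow_eq_zpow_sum {G : Type*} [CommGroup G] (s : G) (n : ι → ℤ) :
    ∏ i, s ^ n i = s ^ ∑ i, n i := by
  have h := map_prod (zpowersHom G s) (fun i => Multiplicative.ofAdd (n i)) univ
  simp only [zpowersHom_apply, toAdd_ofAdd, toAdd_prod] at h
  exact h.symm

section Weights

variable {w β : ι → ℕ} {d γ : ℕ}

theorem exists_pow_eq_one_and_prod_pow_eq {G : Type*} [CommGroup G] (hwd : ∀ i, w i ∣ d)
    {s : G} (hs : s ^ d = 1) :
    ∃ ε : ι → G, (∀ i, ε i ^ (d / w i) = 1) ∧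
      ∏ i, ε i ^ β i = s ^ univ.gcd fun i => β i * w i := by
  obtain ⟨u, hu⟩ := gcd_eq_sum_mul univ fun i => ((β i * w i : ℕ) : ℤ)
  rw [← Nat.cast_finset_gcd] at hu
  refine ⟨fun i => s ^ (u i * w i), fun i => ?_, ?_⟩
  · rw [← zpow_natCast, ← zpow_mul, mul_assoc, ← Nat.cast_mul, Nat.mul_div_cancel' (hwd i),
      mul_comm, zpow_mul, zpow_natCast, hs, one_zpow]
  · simp only [← zpow_natCast, ← zpow_mul, prod_zpow_eq_zpow_sum, hu]
    congr 1
    refine sum_congr rfl fun i _ => ?_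
    push_cast
    ring

theorem prod_pow_div_eq_pow_div (hγ : ∀ i, γ ∣ β i * w i) (hβd : ∑ i, β i * w i = d)
    {M : Type*} [CommMonoid M] (c : M) : ∏ i, c ^ (β i * w i / γ) = c ^ (d / γ) := by
  rw [prod_pow_eq_pow_sum, ← Nat.sum_div fun i _ => hγ i, hβd]

theorem prod_pow_pow_div_eq_prod_pow_pow (hw : ∀ i, 0 < w i) (hwd : ∀ i, w i ∣ d)
    (hγ : ∀ i, γ ∣ β i * w i) (hγd : γ ∣ d) {M : Type*} [CommMonoid M] (x : ι → M) :
    ∏ i, (x i ^ (d / w i)) ^ (β i * w i / γ) = (∏ i, x i ^ β i) ^ (d / γ) := by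
  rw [← prod_pow]
  refine prod_congr rfl fun i _ => ?_
  rw [← pow_mul, ← pow_mul, Nat.div_mul_div_eq_mul_div (hw i) (hwd i) (hγ i) hγd]

theorem exists_pow_eq_and_prod_pow_eq_one {K : Type*} [Field K] [IsAlgClosed K] (hw : ∀ i, 0 < w i)
    (hwd : ∀ i, w i ∣ d) (hd : 0 < d) (hβd : ∑ i, β i * w i = d)
    (hγ : γ = univ.gcd fun i => β i * w i) {c : ι → K}
    (hc : ∏ i, c i ^ (β i * w i / γ) = 1) :
    ∃ x : ι → K, (∀ i, x i ^ (d / w i) = c i) ∧ ∏ i, x i ^ β i = 1 := by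
  have hγi : ∀ i, γ ∣ β i * w i := fun i => hγ ▸ gcd_dvd (mem_univ i)
  have hγd : γ ∣ d := hβd ▸ dvd_sum fun i _ => hγi i
  choose t ht using fun i =>
    IsAlgClosed.exists_pow_nat_eq (c i) (Nat.div_pos (Nat.le_of_dvd hd (hwd i)) (hw i))
  set T := ∏ i, t i ^ β i
  have hT : T ^ (d / γ) = 1 := by
    rw [← prod_pow_pow_div_eq_prod_pow_pow hw hwd hγi hγd]
    simp only [ht, hc]
  have hT₀ : T ≠ 0 := by
    rintro h
    rw [h, zero_pow (Nat.div_pos (Nat.le_of_dvd hd hγd) (Nat.pos_of_dvd_of_pos hγd hd)).ne'] at hT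
    exact zero_ne_one hT
  obtain ⟨s, hs⟩ := IsAlgClosed.exists_pow_nat_eq T⁻¹ (Nat.pos_of_dvd_of_pos hγd hd)
  have hsd : s ^ d = 1 := by rw [← Nat.mul_div_cancel' hγd, pow_mul, hs, inv_pow, hT, inv_one]
  have hs₀ : s ≠ 0 := by rintro rfl; simp [hd.ne'] at hsd
  obtain ⟨ε, hε, hεβ⟩ := exists_pow_eq_one_and_prod_pow_eq (β := β) hwd
    (s := Units.mk0 s hs₀) (Units.ext (by simpa using hsd))
  refine ⟨fun i => t i * ε i, fun i => ?_, ?_⟩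
  · rw [mul_pow, ht, ← Units.val_pow_eq_pow_val, hε, Units.val_one, mul_one]
  · simp only [mul_pow, prod_mul_distrib, ← Units.val_pow_eq_pow_val, ← Units.coe_prod, hεβ, ← hγ]
    rw [Units.val_pow_eq_pow_val, Units.val_mk0, hs, mul_inv_cancel₀ hT₀]

end Weights

variable [DecidableEq ι]

@[to_additive]
theorem prod_apply_update {α M : Type*} [CommMonoid M] (f : ι → α → M) (x : ι → α) (i : ι)
    (t : α) : ∏ j, f j (update x i t j) = f i t * ∏ j ∈ univ.erase i, f j (x j) := by
  rw [prod_congr rfl fun j _ => apply_update f x i t j, prod_update_of_mem (mem_univ i),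
    sdiff_singleton_eq_erase]

section Partial

variable {R : Type*} [CommRing R] (e β : ι → ℕ) (a : R) (x : ι → R) (i : ι)

-- `∂F/∂xᵢ` for `F = ∑ xⱼ ^ eⱼ + a ∏ xⱼ ^ βⱼ`
def fermatPartial : R :=
  e i * x i ^ (e i - 1) + a * (β i * x i ^ (β i - 1) * ∏ j ∈ univ.erase i, x j ^ β j)

theorem mul_fermatPartial :
    x i * fermatPartial e β a x i = e i * x i ^ e i + a * β i * ∏ j, x j ^ β j := by
  rw [fermatPartial, ← mul_prod_erase univ _ (mem_univ i)]
  linear_combination natCast_mul_pow_sub_one_mul_self (e i) (x i) +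
    a * (∏ j ∈ univ.erase i, x j ^ β j) * natCast_mul_pow_sub_one_mul_self (β i) (x i)

variable {e β a x i}

theorem fermatPartial_eq_zero_of_eq_zero (he : e i ≠ 1) (hβ : β i = 0) (hx : x i = 0) :
    fermatPartial e β a x i = 0 := by
  obtain he₀ | he₀ := eq_or_ne (e i) 0
  · simp [fermatPartial, he₀, hβ]
  · simp [fermatPartial, hβ, hx, zero_pow (by omega : e i - 1 ≠ 0)]

end Partial

theorem hasDerivAt_update_sum_pow_add_mul_prod_pow {𝕜 : Type*} [NontriviallyNormedField 𝕜]
    (e β : ι → ℕ) (a : 𝕜) (x : ι → 𝕜) (i : ι) :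
    HasDerivAt (fun t => ∑ j, update x i t j ^ e j + a * ∏ j, update x i t j ^ β j)
      (fermatPartial e β a x i) (x i) := by
  have hF : (fun t => ∑ j, update x i t j ^ e j + a * ∏ j, update x i t j ^ β j) =
      fun t => (t ^ e i + ∑ j ∈ univ.erase i, x j ^ e j) +
        a * (t ^ β i * ∏ j ∈ univ.erase i, x j ^ β j) := by
    funext t
    rw [sum_apply_update (fun j y => y ^ e j), prod_apply_update (fun j y => y ^ β j)]
  rw [hF]
  exact ((hasDerivAt_pow (e i) (x i)).add_const _).add
    (((hasDerivAt_pow (β i) (x i)).mul_const _).const_mul a)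

theorem eq_zero_of_fermatPartial_eq_zero {K : Type*} [Field K] [CharZero K] {e β : ι → ℕ} {a : K}
    {x : ι → K} (he : ∀ i, e i ≠ 0) (hx : ∀ i, fermatPartial e β a x i = 0)
    (hP : ∏ j, x j ^ β j = 0) : x = 0 := by
  obtain ⟨i₀, -, hi₀⟩ := prod_eq_zero_iff.mp hP
  funext j
  obtain rfl | hj := eq_or_ne j i₀
  · exact pow_eq_zero_iff'.mp hi₀ |>.1
  · have hQ : ∏ l ∈ univ.erase j, x l ^ β l = 0 :=
      prod_eq_zero (mem_erase.mpr ⟨hj.symm, mem_univ i₀⟩) hi₀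
    have h := hx j
    rw [fermatPartial, hQ, mul_zero, mul_zero, add_zero, mul_eq_zero,
      Nat.cast_eq_zero, or_iff_right (he j)] at h
    exact pow_eq_zero_iff'.mp h |>.1

section Weights

variable {K : Type*} [Field K] {w β : ι → ℕ} {d γ : ℕ}

theorem neg_pow_mul_prod_eq_pow_of_fermatPartial_eq_zero [CharZero K] (hw : ∀ i, 0 < w i)
    (hwd : ∀ i, w i ∣ d) (hd : 0 < d) (hγ : ∀ i, γ ∣ β i * w i) (hβd : ∑ i, β i * w i = d)
    {a : K} {x : ι → K} (hx₀ : x ≠ 0) (hx : ∀ i, fermatPartial (fun i => d / w i) β a x i = 0) :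
    (-a) ^ (d / γ) * ∏ i, ((β i * w i : ℕ) : K) ^ (β i * w i / γ) = (d : K) ^ (d / γ) := by
  have hγd : γ ∣ d := hβd ▸ dvd_sum fun i _ => hγ i
  set P := ∏ j, x j ^ β j
  have he : ∀ i, d / w i ≠ 0 := fun i => (Nat.div_pos (Nat.le_of_dvd hd (hwd i)) (hw i)).ne'
  have hP : P ≠ 0 := fun hP => hx₀ (eq_zero_of_fermatPartial_eq_zero he hx hP)
  have hkey : ∀ i, (d : K) * x i ^ (d / w i) = -a * (β i * w i : ℕ) * P := by
    intro i
    have h := mul_fermatPartial (fun i => d / w i) β a x i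
    have hcast : ((d / w i : ℕ) : K) * w i = d := by exact_mod_cast Nat.div_mul_cancel (hwd i)
    rw [hx i, mul_zero] at h
    push_cast
    linear_combination (-(w i : K)) * h - x i ^ (d / w i) * hcast
  refine mul_right_cancel₀ (pow_ne_zero (d / γ) hP) ?_
  calc (-a) ^ (d / γ) * (∏ i, ((β i * w i : ℕ) : K) ^ (β i * w i / γ)) * P ^ (d / γ)
      = ∏ i, (-a * (β i * w i : ℕ) * P) ^ (β i * w i / γ) := by
        simp only [mul_pow, prod_mul_distrib, prod_pow_div_eq_pow_div hγ hβd]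
    _ = ∏ i, ((d : K) * x i ^ (d / w i)) ^ (β i * w i / γ) := by simp only [hkey]
    _ = (d : K) ^ (d / γ) * P ^ (d / γ) := by
        rw [prod_congr rfl fun i _ => mul_pow _ _ _, prod_mul_distrib,
          prod_pow_div_eq_pow_div hγ hβd, prod_pow_pow_div_eq_prod_pow_pow hw hwd hγ hγd]

theorem exists_ne_zero_forall_fermatPartial_eq_zero [IsAlgClosed K] [CharZero K]
    (hw : ∀ i, 0 < w i) (hwd : ∀ i, w i ∣ d) (hd : 0 < d) (he : ∀ i, d / w i ≠ 1)
    (hβd : ∑ i, β i * w i = d) (hγ : γ = univ.gcd fun i => β i * w i) {a : K}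
    (ha : (-a) ^ (d / γ) * ∏ i, ((β i * w i : ℕ) : K) ^ (β i * w i / γ) = (d : K) ^ (d / γ)) :
    ∃ x : ι → K, x ≠ 0 ∧ ∀ i, fermatPartial (fun i => d / w i) β a x i = 0 := by
  have hd' : (d : K) ≠ 0 := Nat.cast_ne_zero.mpr hd.ne'
  have hγi : ∀ i, γ ∣ β i * w i := fun i => hγ ▸ gcd_dvd (mem_univ i)
  obtain ⟨x, hxc, hxP⟩ := exists_pow_eq_and_prod_pow_eq_one hw hwd hd hβd hγ
    (c := fun i => -a * (β i * w i : ℕ) / d) (by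
      simp only [div_pow, prod_div_distrib, mul_pow, prod_mul_distrib,
        prod_pow_div_eq_pow_div hγi hβd, ha]
      exact div_self (pow_ne_zero _ hd'))
  refine ⟨x, ?_, fun i => ?_⟩
  · rintro rfl
    obtain ⟨i, -, hi⟩ := exists_ne_zero_of_sum_ne_zero (hβd.trans_ne hd.ne')
    rw [prod_eq_zero (mem_univ i) (zero_pow (left_ne_zero_of_mul hi))] at hxP
    exact zero_ne_one hxP
  obtain hxi | hxi := eq_or_ne (x i) 0
  · have hβ : β i = 0 := by
      by_contra hβ
      rw [prod_eq_zero (mem_univ i) (by rw [hxi, zero_pow hβ])] at hxP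
      exact zero_ne_one hxP
    exact fermatPartial_eq_zero_of_eq_zero (he i) hβ hxi
  · refine (mul_eq_zero.mp ?_).resolve_left hxi
    have h := mul_fermatPartial (fun i => d / w i) β a x i
    have hew : ((d / w i : ℕ) : K) * w i = d := by exact_mod_cast Nat.div_mul_cancel (hwd i)
    have hcast : ((d / w i : ℕ) : K) * (β i * w i : ℕ) / d = β i := by
      rw [Nat.cast_mul, mul_left_comm, hew, mul_div_cancel_right₀ _ hd']
    simp only [hxc, hxP] at h
    linear_combination h - a * hcast

end Weights

theorem stmt_0_general {n : ℕ} (hn : 2 ≤ n)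
    (w β : Fin n → ℕ) (hw : ∀ i, 0 < w i)
    (d : ℕ) (hd : d = ∑ i, w i) (hdvd : ∀ i, w i ∣ d)
    (hβd : ∑ i, β i * w i = d)
    (γ : ℕ) (hγ : γ = Finset.univ.gcd (fun i => β i * w i))
    (a : ℂ) :
    (∃ x : Fin n → ℂ, x ≠ 0 ∧ ∀ i : Fin n,
        deriv (fun t : ℂ =>
          (∑ j, Function.update x i t j ^ (d / w j)) +
            a * ∏ j, Function.update x i t j ^ β j) (x i) = 0) ↔
      a ^ (d / γ) * (∏ i, ((β i * w i : ℕ) : ℂ) ^ (β i * w i / γ)) +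
        (-1 : ℂ) ^ (d / γ - 1) * (d : ℂ) ^ (d / γ) = 0 := by
  have : Nontrivial (Fin n) := Fin.nontrivial_iff_two_le.mpr hn
  have he : ∀ i, d / w i ≠ 1 := fun i => by
    have := hd ▸ two_le_sum_div hw (hd ▸ hdvd i)
    omega
  have hd₀ : 0 < d := hd ▸ sum_pos (fun i _ => hw i) univ_nonempty
  have hγd : γ ∣ d := hβd ▸ hγ ▸ dvd_sum fun i _ => gcd_dvd (mem_univ i)
  have hN : 0 < d / γ := Nat.div_pos (Nat.le_of_dvd hd₀ hγd) (Nat.pos_of_dvd_of_pos hγd hd₀)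
  have hderiv : ∀ (x : Fin n → ℂ) i, deriv (fun t : ℂ =>
      (∑ j, Function.update x i t j ^ (d / w j)) + a * ∏ j, Function.update x i t j ^ β j) (x i) =
      fermatPartial (fun j => d / w j) β a x i :=
    fun x i => (hasDerivAt_update_sum_pow_add_mul_prod_pow _ β a x i).deriv
  simp only [hderiv, add_neg_one_pow_sub_one_mul_eq_zero_iff hN]
  exact ⟨fun ⟨x, hx₀, hx⟩ => neg_pow_mul_prod_eq_pow_of_fermatPartial_eq_zero hw hdvd hd₀
      (fun i => hγ ▸ gcd_dvd (mem_univ i)) hβd hx₀ hx,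
    exists_ne_zero_forall_fermatPartial_eq_zero hw hdvd hd₀ he hβd hγ⟩

theorem stmt_0 {n k : ℕ} (hn : 2 ≤ n) (hk2 : 2 ≤ k) (hkn : k ≤ n)
    (w β : Fin n → ℕ) (hw : ∀ i, 0 < w i)
    (hgcd : Finset.univ.gcd w = 1)
    (d : ℕ) (hd : d = ∑ i, w i) (hdvd : ∀ i, w i ∣ d)
    (hβpos : ∀ i : Fin n, (i : ℕ) < k → 0 < β i)
    (hβ0 : ∀ i : Fin n, k ≤ (i : ℕ) → β i = 0)
    (hβd : ∑ i, β i * w i = d)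
    (γ : ℕ) (hγ : γ = Finset.univ.gcd (fun i => β i * w i))
    (a : ℂ) :
    (∃ x : Fin n → ℂ, x ≠ 0 ∧ ∀ i : Fin n,
        deriv (fun t : ℂ =>
          (∑ j, Function.update x i t j ^ (d / w j)) +
            a * ∏ j, Function.update x i t j ^ β j) (x i) = 0) ↔
      a ^ (d / γ) * (∏ i, ((β i * w i : ℕ) : ℂ) ^ (β i * w i / γ)) +
        (-1 : ℂ) ^ (d / γ - 1) * (d : ℂ) ^ (d / γ) = 0 :=
  stmt_0_general hn w β hw d hd hdvd hβd γ hγ a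
end

section
/- Let a ∈ ℂ and let x = (x_1,…,x_n) ∈ ℂ^n with x ≠ 0 be such that all n partial derivatives ∂F_a/∂x_i vanish at x. Then x_i = 0 for every index i with k < i ≤ n, and x_i ≠ 0 for every index i with 1 ≤ i ≤ k. (All singular points of a fibre lie in the open torus of the first k coordinates and in the coordinate subspace x_{k+1} = ⋯ = x_n = 0.) -/
/- Statement 2: any nonzero critical point of F_a has vanishing last n−k
coordinates and nonvanishing first k coordinates. -/

theorem stmt_2 {n k : ℕ} (hn : 2 ≤ n) (hk2 : 2 ≤ k) (hkn : k ≤ n)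
    (w β : Fin n → ℕ) (hw : ∀ i, 0 < w i)
    (hgcd : Finset.univ.gcd w = 1)
    (d : ℕ) (hd : d = ∑ i, w i) (hdvd : ∀ i, w i ∣ d)
    (hβpos : ∀ i : Fin n, (i : ℕ) < k → 0 < β i)
    (hβ0 : ∀ i : Fin n, k ≤ (i : ℕ) → β i = 0)
    (hβd : ∑ i, β i * w i = d)
    (a : ℂ) (x : Fin n → ℂ) (hx : x ≠ 0)
    (hcrit : ∀ i : Fin n,
        deriv (fun t : ℂ =>
          (∑ j, Function.update x i t j ^ (d / w j)) +
            a * ∏ j, Function.update x i t j ^ β j) (x i) = 0) :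
    (∀ i : Fin n, k ≤ (i : ℕ) → x i = 0) ∧
      (∀ i : Fin n, (i : ℕ) < k → x i ≠ 0) := by
  classical
  -- each exponent d / w i is at least 2
  have hdpos : ∀ i : Fin n, 2 ≤ d / w i := by
    intro i
    have hnt : Nontrivial (Fin n) := Fin.nontrivial_iff_two_le.mpr hn
    obtain ⟨j, hj⟩ := exists_ne i
    have hjm : j ∈ ({i}ᶜ : Finset (Fin n)) := by simpa using hj
    have hlt : w i < d := by
      rw [hd, Fintype.sum_eq_add_sum_compl i]
      have h1 : w j ≤ ∑ l ∈ ({i}ᶜ : Finset (Fin n)), w l :=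
        Finset.single_le_sum (fun l _ => Nat.zero_le _) hjm
      have := hw j
      omega
    obtain ⟨q, hq⟩ := hdvd i
    have hq2 : 1 < q := by
      have : w i * 1 < w i * q := by omega
      exact lt_of_mul_lt_mul_left this (Nat.zero_le _)
    rw [hq, Nat.mul_div_cancel_left _ (hw i)]
    omega
  -- the explicit form of the critical equations
  have key : ∀ i : Fin n,
      (↑(d / w i) : ℂ) * x i ^ (d / w i - 1) +
        a * ((↑(β i) : ℂ) * x i ^ (β i - 1) * ∏ j ∈ ({i}ᶜ : Finset (Fin n)), x j ^ β j) = 0 := by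
    intro i
    have h := hcrit i
    have hfun : (fun t : ℂ =>
          (∑ j, Function.update x i t j ^ (d / w j)) +
            a * ∏ j, Function.update x i t j ^ β j) =
        (fun t : ℂ =>
          (t ^ (d / w i) + ∑ j ∈ ({i}ᶜ : Finset (Fin n)), x j ^ (d / w j)) +
            a * (t ^ β i * ∏ j ∈ ({i}ᶜ : Finset (Fin n)), x j ^ β j)) := by
      funext t
      rw [Fintype.sum_eq_add_sum_compl i, Fintype.prod_eq_mul_prod_compl i]
      simp only [Function.update_self]
      congr 1
      · congr 1
        refine Finset.sum_congr rfl fun j hj => ?_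
        rw [Function.update_of_ne (by simpa using hj)]
      · congr 2
        refine Finset.prod_congr rfl fun j hj => ?_
        rw [Function.update_of_ne (by simpa using hj)]
    rw [hfun] at h
    have hder : HasDerivAt
        (fun t : ℂ =>
          (t ^ (d / w i) + ∑ j ∈ ({i}ᶜ : Finset (Fin n)), x j ^ (d / w j)) +
            a * (t ^ β i * ∏ j ∈ ({i}ᶜ : Finset (Fin n)), x j ^ β j))
        ((↑(d / w i)) * x i ^ (d / w i - 1) +
          a * ((↑(β i)) * x i ^ (β i - 1) * ∏ j ∈ ({i}ᶜ : Finset (Fin n)), x j ^ β j))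
        (x i) := by
      have h1 := (hasDerivAt_pow (d / w i) (x i)).add_const
        (∑ j ∈ ({i}ᶜ : Finset (Fin n)), x j ^ (d / w j))
      have h2 := ((hasDerivAt_pow (β i) (x i)).mul_const
        (∏ j ∈ ({i}ᶜ : Finset (Fin n)), x j ^ β j)).const_mul a
      exact h1.add h2
    rw [hder.deriv] at h
    exact h
  -- extracting x i = 0 from the leading term
  have hzero : ∀ i : Fin n, (↑(d / w i) : ℂ) * x i ^ (d / w i - 1) = 0 → x i = 0 := by
    intro i h
    have hne : ((d / w i : ℕ) : ℂ) ≠ 0 :=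
      Nat.cast_ne_zero.mpr (by have := hdpos i; omega)
    have hp : x i ^ (d / w i - 1) = 0 := by
      rcases mul_eq_zero.mp h with h' | h'
      · exact absurd h' hne
      · exact h'
    have : d / w i - 1 ≠ 0 := by have := hdpos i; omega
    exact pow_eq_zero_iff this |>.mp hp
  have part1 : ∀ i : Fin n, k ≤ (i : ℕ) → x i = 0 := by
    intro i hi
    have h := key i
    rw [hβ0 i hi] at h
    simp only [Nat.cast_zero, zero_mul, mul_zero, add_zero] at h
    exact hzero i h
  refine ⟨part1, ?_⟩
  intro i0 hi0 hx0
  apply hx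
  funext j
  show x j = 0
  by_cases hjk : k ≤ (j : ℕ)
  · exact part1 j hjk
  push_neg at hjk
  by_cases hji : j = i0
  · rw [hji]; exact hx0
  · have h := key j
    have hP : (∏ l ∈ ({j}ᶜ : Finset (Fin n)), x l ^ β l) = 0 := by
      apply Finset.prod_eq_zero (i := i0)
      · simp only [Finset.mem_compl, Finset.mem_singleton]
        exact fun h' => hji h'.symm
      · rw [hx0]
        exact zero_pow (by have := hβpos i0 hi0; omega)
    rw [hP] at h
    simp only [mul_zero, add_zero] at h
    exact hzero j h
end

section
/- Assume additionally w_1 divides w_n, and consider the one-parameter family F_a(x_1,…,x_n) = Σ_{i=1}^n x_i^{d/w_i} + a·x_1^{(d−w_n)/w_1} x_n. (i) For a ∈ ℂ there exists x ∈ ℂ^n, x ≠ 0, at which all partial derivatives of F_a vanish if and only if a^{d/w_n} · w_n · (d−w_n)^{d/w_n − 1} + (−1)^{d/w_n − 1} · d^{d/w_n} = 0. (ii) If a satisfies this equation, then there is exactly one point x ∈ ℂ^n with x_1 = 1 at which all partial derivatives of F_a vanish, and the quotient ℂ[x_2,…,x_n]/⟨G, ∂G/∂x_2, …, ∂G/∂x_n⟩,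 where G(x_2,…,x_n) = F_a(1,x_2,…,x_n), is a finite-dimensional ℂ-vector space of dimension ∏_{i=2}^{n−1} (d/w_i − 1). -/
/-!
The partial derivatives of `F_a` in the middle variables are pure powers, so a critical point
lies in the `(x_1, x_n)`-plane, and it is `0` if `x_1 = 0`. As `F_a` is quasi-homogeneous,
rescaling to `x_1 = 1` turns the two remaining equations into: `x_n` is a double root of
`t ^ k + a t + 1`, where `k = d / w_n`. Since `k (t ^ k + a t + 1) - t (k t ^ (k - 1) + a)` is
`k + (k - 1) a t`, such a root exists iff `a ^ k (k - 1) ^ (k - 1) + (-1) ^ (k - 1) k ^ k = 0`,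
and it is then `t = -k / ((k - 1) a)`. The same identity shows that the Tjurina ideal of `G` is
generated by the `x_j ^ (d / w_j - 1)` for the middle variables together with `x_n - t`.
Adjoining one variable at a time, the quotient by such an ideal is a tower of `AdjoinRoot`s of
monic polynomials, so its dimension is the product of the exponents.
-/

open MvPolynomial

noncomputable def Flast {m : ℕ} (d : ℕ) (w : Fin (m + 2) → ℕ) (a : ℂ)
    (x : Fin (m + 2) → ℂ) : ℂ :=
  (∑ i, x i ^ (d / w i)) +
    a * x 0 ^ ((d - w (Fin.last (m + 1))) / w 0) * x (Fin.last (m + 1))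

section QuotientDimension

variable {K : Type*} [Field K]

noncomputable def spanXSubCPow {σ : Type*} (r : σ → K) (a : σ → ℕ) : Ideal (MvPolynomial σ K) :=
  Ideal.span (Set.range fun j => (X j - C (r j)) ^ a j)

lemma spanXSubCPow_ne_top {σ : Type*} (r : σ → K) {a : σ → ℕ} (ha : ∀ j, 0 < a j) :
    spanXSubCPow r a ≠ ⊤ := by
  intro htop
  have hle : spanXSubCPow r a ≤ RingHom.ker (aeval r).toRingHom := by
    refine Ideal.span_le.2 ?_
    rintro _ ⟨j, rfl⟩
    simp [(ha j).ne']
  exact absurd (hle (htop ▸ Submodule.mem_top (x := 1))) (by simp)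

lemma map_finSuccEquiv_spanXSubCPow {n : ℕ} (r : Fin (n + 1) → K) (a : Fin (n + 1) → ℕ) :
    (spanXSubCPow r a).map (finSuccEquiv K n : MvPolynomial (Fin (n + 1)) K →+* _) =
      (spanXSubCPow (Fin.tail r) (Fin.tail a)).map Polynomial.C ⊔
        Ideal.span {(Polynomial.X - Polynomial.C (C (r 0))) ^ a 0} := by
  have hC (c : K) : finSuccEquiv K n (C c) = Polynomial.C (C c) := by
    simp [finSuccEquiv_apply]
  rw [spanXSubCPow, Fin.range_fin_succ, Ideal.span_insert, Ideal.map_sup, sup_comm,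
    Ideal.map_span, Ideal.map_span, spanXSubCPow, Ideal.map_span, Set.image_singleton,
    ← Set.range_comp, ← Set.range_comp]
  congr 3
  · ext j
    simp [finSuccEquiv_X_succ, hC, Fin.tail]
  · simp [finSuccEquiv_X_zero, hC]

noncomputable def quotientSupSpanAlgEquiv {R : Type*} [CommRing R] [Algebra K R] (I : Ideal R)
    (f : Polynomial R) :
    (Polynomial R ⧸ (I.map Polynomial.C ⊔ Ideal.span {f})) ≃ₐ[K]
      AdjoinRoot (f.map (Ideal.Quotient.mk I)) := by
  have hspan : (Ideal.span {f}).map (Ideal.Quotient.mkₐ K (I.map Polynomial.C)) =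
      Ideal.span {Ideal.Quotient.mk (I.map Polynomial.C) f} := by
    rw [Ideal.map_span, Set.image_singleton, Ideal.Quotient.mkₐ_eq_mk]
  refine (DoubleQuot.quotQuotEquivQuotSupₐ K _ _).symm.trans <|
    (Ideal.quotientEquivAlgOfEq K hspan).trans <|
    (AlgEquiv.ofRingEquiv (f := AdjoinRoot.Polynomial.quotQuotEquivComm I f) fun c => ?_).symm
  change AdjoinRoot.Polynomial.quotQuotEquivComm I f
    (Ideal.Quotient.mk _ (Polynomial.C (Ideal.Quotient.mk I (algebraMap K R c)))) = _
  rw [← Polynomial.map_C, AdjoinRoot.Polynomial.quotQuotEquivComm_mk]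
  rfl

theorem finite_and_finrank_quotient_spanXSubCPow {n : ℕ} (r : Fin n → K) {a : Fin n → ℕ}
    (ha : ∀ j, 0 < a j) :
    Module.Finite K (MvPolynomial (Fin n) K ⧸ spanXSubCPow r a) ∧
      Module.finrank K (MvPolynomial (Fin n) K ⧸ spanXSubCPow r a) = ∏ j, a j := by
  induction n with
  | zero =>
    have h : spanXSubCPow r a = ⊥ := by simp [spanXSubCPow]
    let e := (Ideal.quotientEquivAlgOfEq K h).trans
      ((AlgEquiv.quotientBot K _).trans (isEmptyAlgEquiv K (Fin 0)))
    exact ⟨.equiv e.toLinearEquiv.symm, by simp [e.toLinearEquiv.finrank_eq]⟩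
  | succ n ih =>
    set I := spanXSubCPow (Fin.tail r) (Fin.tail a)
    obtain ⟨hfin, hrank⟩ := ih (Fin.tail r) (a := Fin.tail a) fun j => ha j.succ
    have : Nontrivial (MvPolynomial (Fin n) K ⧸ I) :=
      Ideal.Quotient.nontrivial_iff.mpr (spanXSubCPow_ne_top _ fun j => ha j.succ)
    set g := ((Polynomial.X - Polynomial.C (C (r 0))) ^ a 0).map (Ideal.Quotient.mk I)
    have hg : g.Monic := ((Polynomial.monic_X_sub_C _).pow _).map _
    let pb := AdjoinRoot.powerBasis' hg
    have : Module.Finite (MvPolynomial (Fin n) K ⧸ I) (AdjoinRoot g) := .of_basis pb.basis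
    have : Module.Free (MvPolynomial (Fin n) K ⧸ I) (AdjoinRoot g) := .of_basis pb.basis
    have hrank_g : Module.finrank (MvPolynomial (Fin n) K ⧸ I) (AdjoinRoot g) = a 0 := by
      rw [Module.finrank_eq_card_basis pb.basis]
      simp [pb, g, (Polynomial.monic_X_sub_C _).natDegree_pow]
    let e := (Ideal.quotientEquivAlg _ _ (finSuccEquiv K n)
      (map_finSuccEquiv_spanXSubCPow r a).symm).trans (quotientSupSpanAlgEquiv I _)
    have : Module.Finite K (AdjoinRoot g) := .trans (MvPolynomial (Fin n) K ⧸ I) _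
    refine ⟨.equiv e.toLinearEquiv.symm, ?_⟩
    rw [e.toLinearEquiv.finrank_eq, ← Module.finrank_mul_finrank K (MvPolynomial (Fin n) K ⧸ I),
      hrank, hrank_g, Fin.prod_univ_succ, mul_comm]
    rfl

end QuotientDimension

section Trinomial

variable {K : Type*} [Field K]

noncomputable def trinomial (k : ℕ) (a : K) : Polynomial K :=
  Polynomial.X ^ k + Polynomial.C a * Polynomial.X + 1

/-- Up to sign, the discriminant of `trinomial k a`. -/
def trinomialDiscr (k : ℕ) (a : K) : K := a ^ k * (k - 1) ^ (k - 1) + (-1) ^ (k - 1) * k ^ k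

lemma derivative_trinomial (k : ℕ) (a : K) :
    Polynomial.derivative (trinomial k a) =
      (k : Polynomial K) * Polynomial.X ^ (k - 1) + Polynomial.C a := by
  simp [trinomial, Polynomial.derivative_X_pow]

lemma natCast_mul_trinomial_sub_X_mul_derivative {k : ℕ} (hk : 0 < k) {a t : K}
    (h₁ : (k : K) + (k - 1) * a * t = 0) :
    (k : Polynomial K) * trinomial k a - Polynomial.X * Polynomial.derivative (trinomial k a) =
      Polynomial.C ((k - 1) * a) * (Polynomial.X - Polynomial.C t) := by
  have h₁' := congrArg Polynomial.C h₁
  have hX : (Polynomial.X : Polynomial K) ^ k = Polynomial.X * Polynomial.X ^ (k - 1) := by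
    rw [← pow_succ', Nat.sub_add_cancel hk]
  rw [derivative_trinomial, trinomial]
  simp only [map_add, map_mul, map_sub, map_natCast, map_one, map_zero] at h₁' ⊢
  linear_combination h₁' + (k : Polynomial K) * hX

variable [CharZero K]

lemma isRoot_trinomial_and_derivative {k : ℕ} (hk : 0 < k) {a t : K}
    (h₁ : (k : K) + (k - 1) * a * t = 0) (h₂ : k * t ^ (k - 1) + a = 0) :
    (trinomial k a).IsRoot t ∧ (Polynomial.derivative (trinomial k a)).IsRoot t := by
  have h₂' : (Polynomial.derivative (trinomial k a)).IsRoot t := by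
    simpa [derivative_trinomial] using h₂
  have h := congrArg (Polynomial.eval t) (natCast_mul_trinomial_sub_X_mul_derivative hk h₁)
  simp only [Polynomial.eval_sub, Polynomial.eval_mul, Polynomial.eval_natCast, Polynomial.eval_X,
    Polynomial.eval_C, h₂'.eq_zero, mul_zero, sub_zero, sub_self] at h
  exact ⟨(mul_eq_zero.1 h).resolve_left (by exact_mod_cast hk.ne'), h₂'⟩

theorem trinomial_doubleRoot_iff {k : ℕ} (hk : 2 ≤ k) {a t : K} :
    ((k : K) + (k - 1) * a * t = 0 ∧ k * t ^ (k - 1) + a = 0) ↔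
      trinomialDiscr k a = 0 ∧ t = -k / ((k - 1) * a) := by
  have hk0 : (k : K) ≠ 0 := by exact_mod_cast (by omega : k ≠ 0)
  have hk1 : (k : K) - 1 ≠ 0 := by
    rw [sub_ne_zero]; exact_mod_cast (by omega : k ≠ 1)
  have key (ha : a ≠ 0) : ((k - 1) * a) ^ (k - 1) * (k * (-k / ((k - 1) * a)) ^ (k - 1) + a) =
      trinomialDiscr k a := by
    rw [div_pow, mul_add, mul_left_comm, mul_div_cancel₀ _ (pow_ne_zero _ (mul_ne_zero hk1 ha)),
      mul_pow]
    obtain ⟨j, rfl⟩ : ∃ j, k = j + 1 := ⟨k - 1, by omega⟩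
    simp only [add_tsub_cancel_right, trinomialDiscr]
    ring
  constructor
  · rintro ⟨h₁, h₂⟩
    have ha : a ≠ 0 := by rintro rfl; simp [hk0] at h₁
    have ht : t = -k / ((k - 1) * a) := by field_simp; linear_combination h₁
    refine ⟨?_, ht⟩
    rw [← key ha, ← ht, h₂, mul_zero]
  · rintro ⟨hD, rfl⟩
    have ha : a ≠ 0 := by
      rintro rfl
      simp [trinomialDiscr, zero_pow (show k ≠ 0 by omega), hk0] at hD
    refine ⟨by field_simp; ring, ?_⟩
    have := key ha
    rw [hD] at this
    exact (mul_eq_zero.1 this).resolve_left (pow_ne_zero _ (mul_ne_zero hk1 ha))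

end Trinomial

section Tjurina

variable {K : Type*} [Field K] {σ : Type*}

noncomputable def tjurinaIdeal (G : MvPolynomial σ K) : Ideal (MvPolynomial σ K) :=
  Ideal.span ({G} ∪ Set.range fun j => pderiv j G)

lemma X_sub_C_dvd_aeval_X {p : Polynomial K} {t : K} (h : p.IsRoot t) (i : σ) :
    X i - C t ∣ Polynomial.aeval (X i : MvPolynomial σ K) p := by
  simpa using map_dvd (Polynomial.aeval (X i : MvPolynomial σ K)) (Polynomial.dvd_iff_isRoot.2 h)

variable [DecidableEq σ]

lemma spanXSubCPow_single_update (κ : σ → ℕ) (ℓ : σ) (t : K) :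
    spanXSubCPow (Pi.single ℓ t) (Function.update (fun j => κ j - 1) ℓ 1) =
      Ideal.span (Set.range fun j => if j = ℓ then X ℓ - C t else X j ^ (κ j - 1)) := by
  refine congrArg (fun f => Ideal.span (Set.range f)) (funext fun j => ?_)
  split_ifs with h
  · simp [h]
  · simp [h]

variable [Fintype σ]

noncomputable def chartPoly (κ : σ → ℕ) (ℓ : σ) (a : K) : MvPolynomial σ K :=
  1 + ∑ j, X j ^ κ j + C a * X ℓ

lemma pderiv_chartPoly (κ : σ → ℕ) (ℓ : σ) (a : K) (j : σ) :
    pderiv j (chartPoly κ ℓ a) = C (κ j : K) * X j ^ (κ j - 1) + if j = ℓ then C a else 0 := by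
  simp [chartPoly, pderiv_X, Pi.single_apply, @eq_comm _ ℓ]

lemma pderiv_chartPoly_self (κ : σ → ℕ) (ℓ : σ) (a : K) :
    pderiv ℓ (chartPoly κ ℓ a) =
      Polynomial.aeval (X ℓ) (Polynomial.derivative (trinomial (κ ℓ) a)) := by
  simp [pderiv_chartPoly, derivative_trinomial]

lemma chartPoly_eq {κ : σ → ℕ} (hκ : ∀ j, 0 < κ j) (ℓ : σ) (a : K) :
    chartPoly κ ℓ a = ∑ j ∈ Finset.univ.erase ℓ, X j * X j ^ (κ j - 1) +
      Polynomial.aeval (X ℓ) (trinomial (κ ℓ) a) := by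
  have hsum : ∑ j ∈ Finset.univ.erase ℓ, (X j : MvPolynomial σ K) ^ κ j =
      ∑ j ∈ Finset.univ.erase ℓ, X j * X j ^ (κ j - 1) :=
    Finset.sum_congr rfl fun j _ => by rw [← pow_succ', Nat.sub_add_cancel (hκ j)]
  rw [chartPoly, ← Finset.add_sum_erase _ _ (Finset.mem_univ ℓ), hsum, trinomial]
  simp only [map_add, map_mul, map_pow, map_one, Polynomial.aeval_X, Polynomial.aeval_C,
    MvPolynomial.algebraMap_eq]
  ring

lemma tjurinaIdeal_chartPoly_le {κ : σ → ℕ} (hκ : ∀ j, 0 < κ j) (ℓ : σ) {a t : K}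
    (hroot : (trinomial (κ ℓ) a).IsRoot t)
    (hroot' : (Polynomial.derivative (trinomial (κ ℓ) a)).IsRoot t) :
    tjurinaIdeal (chartPoly κ ℓ a) ≤
      Ideal.span (Set.range fun j => if j = ℓ then X ℓ - C t else X j ^ (κ j - 1)) := by
  set I := Ideal.span (Set.range fun j => if j = ℓ then X ℓ - C t else X j ^ (κ j - 1))
  have hmem (j : σ) : (if j = ℓ then X ℓ - C t else X j ^ (κ j - 1)) ∈ I :=
    Ideal.subset_span ⟨j, rfl⟩
  have hℓ : X ℓ - C t ∈ I := by simpa using hmem ℓ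
  have hj (j : σ) (h : j ≠ ℓ) : X j ^ (κ j - 1) ∈ I := by simpa [h] using hmem j
  have haeval {p : Polynomial K} (hp : p.IsRoot t) : Polynomial.aeval (X ℓ) p ∈ I :=
    Ideal.mem_of_dvd _ (X_sub_C_dvd_aeval_X hp ℓ) hℓ
  refine Ideal.span_le.2 (Set.union_subset ?_ (Set.range_subset_iff.2 fun j => ?_))
  · rw [Set.singleton_subset_iff, SetLike.mem_coe, chartPoly_eq hκ]
    exact add_mem (Ideal.sum_mem _ fun j hj' =>
      Ideal.mul_mem_left _ _ (hj j (Finset.ne_of_mem_erase hj'))) (haeval hroot)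
  · rcases eq_or_ne j ℓ with rfl | h
    · rw [SetLike.mem_coe, pderiv_chartPoly_self]
      exact haeval hroot'
    · rw [SetLike.mem_coe, pderiv_chartPoly, if_neg h, add_zero]
      exact Ideal.mul_mem_left _ _ (hj j h)

variable [CharZero K]

lemma le_tjurinaIdeal_chartPoly {κ : σ → ℕ} (hκ : ∀ j, 0 < κ j) (ℓ : σ) {a t : K}
    (h₁ : (κ ℓ : K) + (κ ℓ - 1) * a * t = 0) :
    Ideal.span (Set.range fun j => if j = ℓ then X ℓ - C t else X j ^ (κ j - 1)) ≤
      tjurinaIdeal (chartPoly κ ℓ a) := by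
  set T := tjurinaIdeal (chartPoly κ ℓ a)
  set k := κ ℓ
  have hpderiv (j : σ) : pderiv j (chartPoly κ ℓ a) ∈ T := Ideal.subset_span (Or.inr ⟨j, rfl⟩)
  have hj (j : σ) (h : j ≠ ℓ) : X j ^ (κ j - 1) ∈ T := by
    have hκj : (κ j : K) ≠ 0 := by exact_mod_cast (hκ j).ne'
    have := Ideal.mul_mem_left _ (C (κ j : K)⁻¹) (hpderiv j)
    rwa [pderiv_chartPoly, if_neg h, add_zero, ← mul_assoc, ← map_mul, inv_mul_cancel₀ hκj,
      map_one, one_mul] at this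
  have hg : Polynomial.aeval (X ℓ) (trinomial k a) ∈ T := by
    have hG : chartPoly κ ℓ a ∈ T := Ideal.subset_span (Or.inl rfl)
    rw [chartPoly_eq hκ] at hG
    exact (Submodule.add_mem_iff_right _ (Ideal.sum_mem _ fun j hj' =>
      Ideal.mul_mem_left _ _ (hj j (Finset.ne_of_mem_erase hj')))).1 hG
  have hg' := pderiv_chartPoly_self κ ℓ a ▸ hpderiv ℓ
  have hc : ((k : K) - 1) * a ≠ 0 := fun h =>
    (by exact_mod_cast (hκ ℓ).ne' : (k : K) ≠ 0) (by linear_combination h₁ - t * h)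
  have hXt : X ℓ - C t ∈ T := by
    have h : Polynomial.X - Polynomial.C t = Polynomial.C (((k : K) - 1) * a)⁻¹ *
        ((k : Polynomial K) * trinomial k a -
          Polynomial.X * Polynomial.derivative (trinomial k a)) := by
      rw [natCast_mul_trinomial_sub_X_mul_derivative (hκ ℓ) h₁, ← mul_assoc, ← map_mul,
        inv_mul_cancel₀ hc, map_one, one_mul]
    have := congrArg (Polynomial.aeval (X ℓ : MvPolynomial σ K)) h
    simp only [map_sub, map_mul, map_natCast, Polynomial.aeval_X, Polynomial.aeval_C,
      MvPolynomial.algebraMap_eq] at this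
    rw [this]
    exact Ideal.mul_mem_left _ _ (sub_mem (Ideal.mul_mem_left _ _ hg) (Ideal.mul_mem_left _ _ hg'))
  refine Ideal.span_le.2 (Set.range_subset_iff.2 fun j => ?_)
  split_ifs with h
  · exact hXt
  · exact hj j h

theorem finite_and_finrank_quotient_tjurinaIdeal {n : ℕ} {κ : Fin n → ℕ} (hκ : ∀ j, 2 ≤ κ j)
    (ℓ : Fin n) {a : K} (hD : trinomialDiscr (κ ℓ) a = 0) :
    Module.Finite K (MvPolynomial (Fin n) K ⧸ tjurinaIdeal (chartPoly κ ℓ a)) ∧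
      Module.finrank K (MvPolynomial (Fin n) K ⧸ tjurinaIdeal (chartPoly κ ℓ a)) =
        ∏ j ∈ Finset.univ.filter (· ≠ ℓ), (κ j - 1) := by
  have hκ₀ (j : Fin n) : 0 < κ j := lt_of_lt_of_le two_pos (hκ j)
  obtain ⟨h₁, h₂⟩ := (trinomial_doubleRoot_iff (hκ ℓ)).2 ⟨hD, rfl⟩
  obtain ⟨hroot, hroot'⟩ := isRoot_trinomial_and_derivative (hκ₀ ℓ) h₁ h₂
  rw [(tjurinaIdeal_chartPoly_le hκ₀ ℓ hroot hroot').antisymm (le_tjurinaIdeal_chartPoly hκ₀ ℓ h₁),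
    ← spanXSubCPow_single_update, Finset.filter_ne', ← Finset.sdiff_singleton_eq_erase,
    ← one_mul (Finset.prod _ _), ← Finset.prod_update_of_mem (Finset.mem_univ ℓ)]
  exact finite_and_finrank_quotient_spanXSubCPow _ fun j => by
    rcases eq_or_ne j ℓ with rfl | h
    · simp
    · simpa [h, Nat.lt_iff_add_one_le] using hκ j

end Tjurina

lemma lt_univ_sum_of_forall_pos {ι : Type*} [Fintype ι] [Nontrivial ι] {w : ι → ℕ}
    (hw : ∀ i, 0 < w i) (i : ι) : w i < ∑ j, w j := by
  obtain ⟨j, hj⟩ := exists_ne i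
  exact Finset.single_lt_sum hj (Finset.mem_univ _) (Finset.mem_univ _) (hw j) fun _ _ _ =>
    Nat.zero_le _

lemma two_le_div_of_dvd {v d : ℕ} (hv : 0 < v) (hvd : v ∣ d) (hlt : v < d) : 2 ≤ d / v := by
  obtain ⟨c, rfl⟩ := hvd
  rw [Nat.mul_div_cancel_left _ hv]
  by_contra! hc
  interval_cases c <;> omega

section CriticalPoints

variable {m : ℕ}

def IsCriticalPoint (d : ℕ) (w : Fin (m + 2) → ℕ) (a : ℂ) (x : Fin (m + 2) → ℂ) : Prop :=
  ∀ i, deriv (fun t => Flast d w a (Function.update x i t)) (x i) = 0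

variable {w : Fin (m + 2) → ℕ} {d k s : ℕ} {a : ℂ} {x : Fin (m + 2) → ℂ}

lemma deriv_Flast_update (i : Fin (m + 2)) :
    deriv (fun t => Flast d w a (Function.update x i t)) (x i) =
      (d / w i : ℕ) * x i ^ (d / w i - 1)
        + (if i = 0 then a * ((d - w (Fin.last (m + 1))) / w 0 : ℕ) *
            x 0 ^ ((d - w (Fin.last (m + 1))) / w 0 - 1) * x (Fin.last (m + 1)) else 0)
        + (if i = Fin.last (m + 1) then a * x 0 ^ ((d - w (Fin.last (m + 1))) / w 0) else 0) := by
  have hx : ∀ j, HasDerivAt (fun t => Function.update x i t j)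
      ((Pi.single i 1 : Fin (m + 2) → ℂ) j) (x i) :=
    hasDerivAt_pi.1 (hasDerivAt_update x i (x i))
  have h := (HasDerivAt.fun_sum (u := Finset.univ) fun j _ => (hx j).fun_pow (d / w j)).add
    ((((hx 0).fun_pow ((d - w (Fin.last (m + 1))) / w 0)).const_mul a).mul (hx (Fin.last (m + 1))))
  simp only [Function.update_eq_self] at h
  refine h.deriv.trans ?_
  rcases eq_or_ne i 0 with rfl | h0
  · simp [Pi.single_apply, Fin.last_pos.ne', mul_assoc]
  rcases eq_or_ne i (Fin.last (m + 1)) with rfl | hL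
  · simp [Pi.single_apply, Fin.last_pos.ne']
  · simp [Pi.single_apply, h0, hL, Ne.symm h0, Ne.symm hL]

lemma Flast_exponents (hw : ∀ i, 0 < w i) (hκ : ∀ i, 2 ≤ d / w i)
    (hk : d = w (Fin.last (m + 1)) * k) (hs : w (Fin.last (m + 1)) = w 0 * s) :
    2 ≤ k ∧ 0 < s ∧ d / w (Fin.last (m + 1)) = k ∧ d / w 0 = s * k ∧
      (d - w (Fin.last (m + 1))) / w 0 = s * (k - 1) := by
  have hkL : d / w (Fin.last (m + 1)) = k := by rw [hk, Nat.mul_div_cancel_left _ (hw _)]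
  have hs0 : 0 < s := Nat.pos_of_ne_zero fun h => (hw _).ne' (by rw [hs, h, mul_zero])
  refine ⟨hkL ▸ hκ _, hs0, hkL, ?_, ?_⟩
  · rw [hk, hs, mul_assoc, Nat.mul_div_cancel_left _ (hw 0)]
  · rw [hk, ← Nat.mul_sub_one, hs, mul_assoc, Nat.mul_div_cancel_left _ (hw 0)]

theorem isCriticalPoint_iff (hw : ∀ i, 0 < w i) (hκ : ∀ i, 2 ≤ d / w i)
    (hk : d = w (Fin.last (m + 1)) * k) (hs : w (Fin.last (m + 1)) = w 0 * s) :
    IsCriticalPoint d w a x ↔ (∀ i, i ≠ 0 → i ≠ Fin.last (m + 1) → x i = 0) ∧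
      (s : ℂ) * k * x 0 ^ (s * k - 1) +
        a * (s * (k - 1)) * x 0 ^ (s * (k - 1) - 1) * x (Fin.last (m + 1)) = 0 ∧
      (k : ℂ) * x (Fin.last (m + 1)) ^ (k - 1) + a * x 0 ^ (s * (k - 1)) = 0 := by
  obtain ⟨hk2, -, hkL, hk0, he⟩ := Flast_exponents hw hκ hk hs
  have hmid (i : Fin (m + 2)) (h0 : i ≠ 0) (hL : i ≠ Fin.last (m + 1)) :
      deriv (fun t => Flast d w a (Function.update x i t)) (x i) = 0 ↔ x i = 0 := by
    have := hκ i
    rw [deriv_Flast_update, if_neg h0, if_neg hL, add_zero, add_zero, mul_eq_zero,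
      pow_eq_zero_iff (by omega), Nat.cast_eq_zero, or_iff_right (by omega)]
  have hzero : deriv (fun t => Flast d w a (Function.update x 0 t)) (x 0) =
      (s : ℂ) * k * x 0 ^ (s * k - 1) +
        a * (s * (k - 1)) * x 0 ^ (s * (k - 1) - 1) * x (Fin.last (m + 1)) := by
    rw [deriv_Flast_update, if_pos rfl, if_neg Fin.last_pos.ne, add_zero, hk0, he]
    push_cast [Nat.one_le_of_lt hk2]
    rfl
  have hlast : deriv (fun t => Flast d w a (Function.update x (Fin.last (m + 1)) t))
      (x (Fin.last (m + 1))) =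
        (k : ℂ) * x (Fin.last (m + 1)) ^ (k - 1) + a * x 0 ^ (s * (k - 1)) := by
    rw [deriv_Flast_update, if_neg Fin.last_pos.ne', if_pos rfl, add_zero, hkL, he]
  constructor
  · intro h
    exact ⟨fun i h0 hL => (hmid i h0 hL).1 (h i), hzero ▸ h 0, hlast ▸ h _⟩
  · rintro ⟨hm, h0, hL⟩ i
    rcases eq_or_ne i 0 with rfl | hi0
    · exact hzero ▸ h0
    rcases eq_or_ne i (Fin.last (m + 1)) with rfl | hiL
    · exact hlast ▸ hL
    · exact (hmid i hi0 hiL).2 (hm i hi0 hiL)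

lemma isCriticalPoint_iff_of_apply_zero_eq_one (hw : ∀ i, 0 < w i) (hκ : ∀ i, 2 ≤ d / w i)
    (hk : d = w (Fin.last (m + 1)) * k) (hs : w (Fin.last (m + 1)) = w 0 * s) (hx : x 0 = 1) :
    IsCriticalPoint d w a x ↔ (∀ i, i ≠ 0 → i ≠ Fin.last (m + 1) → x i = 0) ∧
      ((k : ℂ) + (k - 1) * a * x (Fin.last (m + 1)) = 0 ∧
        k * x (Fin.last (m + 1)) ^ (k - 1) + a = 0) := by
  obtain ⟨-, hs0, -⟩ := Flast_exponents hw hκ hk hs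
  rw [isCriticalPoint_iff hw hκ hk hs, hx]
  simp only [one_pow, mul_one]
  rw [show (s : ℂ) * k + a * (s * (k - 1)) * x (Fin.last (m + 1)) =
      s * (k + (k - 1) * a * x (Fin.last (m + 1))) by ring, mul_eq_zero,
    or_iff_right (by exact_mod_cast hs0.ne')]

theorem isCriticalPoint_iff_eq_single_add_single (hw : ∀ i, 0 < w i) (hκ : ∀ i, 2 ≤ d / w i)
    (hk : d = w (Fin.last (m + 1)) * k) (hs : w (Fin.last (m + 1)) = w 0 * s) (hx : x 0 = 1) :
    IsCriticalPoint d w a x ↔ trinomialDiscr k a = 0 ∧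
      x = Pi.single 0 1 + Pi.single (Fin.last (m + 1)) (-k / ((k - 1) * a)) := by
  obtain ⟨hk2, -⟩ := Flast_exponents hw hκ hk hs
  rw [isCriticalPoint_iff_of_apply_zero_eq_one hw hκ hk hs hx, trinomial_doubleRoot_iff hk2]
  constructor
  · rintro ⟨hmid, hD, hL⟩
    refine ⟨hD, funext fun i => ?_⟩
    rcases eq_or_ne i 0 with rfl | h0
    · simp [hx, Fin.last_pos.ne]
    rcases eq_or_ne i (Fin.last (m + 1)) with rfl | hiL
    · simp [hL, Fin.last_pos.ne']
    · simp [hmid i h0 hiL, h0, hiL]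
  · rintro ⟨hD, rfl⟩
    refine ⟨fun i h0 hL => by simp [h0, hL], hD, by simp [Fin.last_pos.ne']⟩

lemma apply_zero_ne_zero_of_isCriticalPoint (hw : ∀ i, 0 < w i) (hκ : ∀ i, 2 ≤ d / w i)
    (hk : d = w (Fin.last (m + 1)) * k) (hs : w (Fin.last (m + 1)) = w 0 * s)
    (h : IsCriticalPoint d w a x) (hx : x ≠ 0) : x 0 ≠ 0 := by
  obtain ⟨hk2, hs0, -⟩ := Flast_exponents hw hκ hk hs
  obtain ⟨hmid, -, hL⟩ := (isCriticalPoint_iff hw hκ hk hs).1 h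
  intro h0
  have hp : s * (k - 1) ≠ 0 := mul_ne_zero hs0.ne' (by omega)
  rw [h0, zero_pow hp, mul_zero, add_zero, mul_eq_zero, pow_eq_zero_iff (by omega)] at hL
  refine hx (funext fun i => ?_)
  rcases eq_or_ne i 0 with rfl | hi0
  · exact h0
  rcases eq_or_ne i (Fin.last (m + 1)) with rfl | hiL
  · exact hL.resolve_left (by exact_mod_cast (by omega : k ≠ 0))
  · exact hmid i hi0 hiL

-- `F_a` is quasi-homogeneous: rescaling `x` to `x 0 = 1` turns `x (Fin.last _)` into
-- `x (Fin.last _) / x 0 ^ s`.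
lemma doubleRoot_of_isCriticalPoint (hw : ∀ i, 0 < w i) (hκ : ∀ i, 2 ≤ d / w i)
    (hk : d = w (Fin.last (m + 1)) * k) (hs : w (Fin.last (m + 1)) = w 0 * s)
    (h : IsCriticalPoint d w a x) (hx0 : x 0 ≠ 0) :
    (k : ℂ) + (k - 1) * a * (x (Fin.last (m + 1)) / x 0 ^ s) = 0 ∧
      k * (x (Fin.last (m + 1)) / x 0 ^ s) ^ (k - 1) + a = 0 := by
  obtain ⟨hk2, hs0, -⟩ := Flast_exponents hw hκ hk hs
  obtain ⟨-, h0, hL⟩ := (isCriticalPoint_iff hw hκ hk hs).1 h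
  set u := x (Fin.last (m + 1)) / x 0 ^ s
  have hxL : x (Fin.last (m + 1)) = u * x 0 ^ s := (div_mul_cancel₀ _ (pow_ne_zero s hx0)).symm
  obtain ⟨n, hn⟩ : ∃ n, s * (k - 1) = n + 1 :=
    ⟨s * (k - 1) - 1, by have := Nat.mul_le_mul hs0 (by omega : 1 ≤ k - 1); omega⟩
  have hsk : s * k = n + 1 + s := by
    rw [← hn, ← mul_add_one, Nat.sub_add_cancel (by omega : 1 ≤ k)]
  rw [hxL, hsk, hn, Nat.add_sub_cancel, show n + 1 + s - 1 = n + s by omega] at h0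
  rw [hxL, mul_pow, ← pow_mul, hn] at hL
  constructor
  · have : x 0 ^ (n + 1 + s) * s * (k + (k - 1) * a * u) = 0 := by
      linear_combination x 0 * h0
    simpa [hx0, hs0.ne'] using this
  · have : x 0 ^ (n + 1) * (k * u ^ (k - 1) + a) = 0 := by linear_combination hL
    simpa [hx0] using this

theorem existsUnique_isCriticalPoint (hw : ∀ i, 0 < w i) (hκ : ∀ i, 2 ≤ d / w i)
    (hk : d = w (Fin.last (m + 1)) * k) (hs : w (Fin.last (m + 1)) = w 0 * s)
    (hD : trinomialDiscr k a = 0) : ∃! x, x 0 = 1 ∧ IsCriticalPoint d w a x := by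
  set p : Fin (m + 2) → ℂ := Pi.single 0 1 + Pi.single (Fin.last (m + 1)) (-k / ((k - 1) * a))
  have hp0 : p 0 = 1 := by simp [p, Fin.last_pos.ne]
  exact ⟨p, ⟨hp0, (isCriticalPoint_iff_eq_single_add_single hw hκ hk hs hp0).2 ⟨hD, rfl⟩⟩,
    fun y ⟨hy0, hy⟩ => ((isCriticalPoint_iff_eq_single_add_single hw hκ hk hs hy0).1 hy).2⟩

theorem exists_ne_zero_isCriticalPoint_iff (hw : ∀ i, 0 < w i) (hκ : ∀ i, 2 ≤ d / w i)
    (hk : d = w (Fin.last (m + 1)) * k) (hs : w (Fin.last (m + 1)) = w 0 * s) :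
    (∃ x, x ≠ 0 ∧ IsCriticalPoint d w a x) ↔ trinomialDiscr k a = 0 := by
  obtain ⟨hk2, -⟩ := Flast_exponents hw hκ hk hs
  constructor
  · rintro ⟨x, hx, h⟩
    exact ((trinomial_doubleRoot_iff hk2).1 (doubleRoot_of_isCriticalPoint hw hκ hk hs h
      (apply_zero_ne_zero_of_isCriticalPoint hw hκ hk hs h hx))).1
  · intro hD
    obtain ⟨x, hx0, hx⟩ := (existsUnique_isCriticalPoint hw hκ hk hs hD).exists
    exact ⟨x, fun h => by simp [h] at hx0, hx⟩

end CriticalPoints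

lemma discriminant_eq_zero_iff {v d k : ℕ} (a : ℂ) (hv : 0 < v) (hk : d = v * k) (hk1 : 1 ≤ k) :
    a ^ (d / v) * (v : ℂ) * ((d - v : ℕ) : ℂ) ^ (d / v - 1) +
        (-1 : ℂ) ^ (d / v - 1) * (d : ℂ) ^ (d / v) = 0 ↔ trinomialDiscr k a = 0 := by
  subst hk
  have h : a ^ (v * k / v) * (v : ℂ) * ((v * k - v : ℕ) : ℂ) ^ (v * k / v - 1) +
      (-1 : ℂ) ^ (v * k / v - 1) * ((v * k : ℕ) : ℂ) ^ (v * k / v) =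
      (v : ℂ) ^ k * trinomialDiscr k a := by
    rw [Nat.mul_div_cancel_left _ hv, ← Nat.mul_sub_one]
    obtain ⟨j, rfl⟩ : ∃ j, k = j + 1 := ⟨k - 1, by omega⟩
    simp only [trinomialDiscr, add_tsub_cancel_right, Nat.cast_mul, mul_pow]
    push_cast
    ring
  rw [h, mul_eq_zero_iff_left (pow_ne_zero _ (by exact_mod_cast hv.ne'))]

theorem stmt_5_general {m : ℕ}
    (w : Fin (m + 2) → ℕ) (hw : ∀ i, 0 < w i)
    (d : ℕ) (hd : d = ∑ i, w i) (hdvd : ∀ i, w i ∣ d)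
    (hwn : w 0 ∣ w (Fin.last (m + 1)))
    (a : ℂ)
    (G : MvPolynomial (Fin (m + 1)) ℂ)
    (hG : G = 1 + (∑ j : Fin (m + 1), X j ^ (d / w j.succ)) + C a * X (Fin.last m))
    (J : Ideal (MvPolynomial (Fin (m + 1)) ℂ))
    (hJ : J = Ideal.span ({G} ∪ Set.range (fun j : Fin (m + 1) => pderiv j G))) :
    ((∃ x : Fin (m + 2) → ℂ, x ≠ 0 ∧ ∀ i : Fin (m + 2),
        deriv (fun t : ℂ => Flast d w a (Function.update x i t)) (x i) = 0) ↔
      a ^ (d / w (Fin.last (m + 1))) * (w (Fin.last (m + 1)) : ℂ) *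
          ((d - w (Fin.last (m + 1)) : ℕ) : ℂ) ^ (d / w (Fin.last (m + 1)) - 1) +
        (-1 : ℂ) ^ (d / w (Fin.last (m + 1)) - 1) *
          (d : ℂ) ^ (d / w (Fin.last (m + 1))) = 0) ∧
    (a ^ (d / w (Fin.last (m + 1))) * (w (Fin.last (m + 1)) : ℂ) *
          ((d - w (Fin.last (m + 1)) : ℕ) : ℂ) ^ (d / w (Fin.last (m + 1)) - 1) +
        (-1 : ℂ) ^ (d / w (Fin.last (m + 1)) - 1) *
          (d : ℂ) ^ (d / w (Fin.last (m + 1))) = 0 →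
      (∃! x : Fin (m + 2) → ℂ, x 0 = 1 ∧ ∀ i : Fin (m + 2),
          deriv (fun t : ℂ => Flast d w a (Function.update x i t)) (x i) = 0) ∧
      FiniteDimensional ℂ (MvPolynomial (Fin (m + 1)) ℂ ⧸ J) ∧
      Module.finrank ℂ (MvPolynomial (Fin (m + 1)) ℂ ⧸ J) =
        ∏ j ∈ Finset.univ.filter (fun j : Fin (m + 1) => j ≠ Fin.last m),
          (d / w j.succ - 1)) := by
  have hκ (i : Fin (m + 2)) : 2 ≤ d / w i :=
    two_le_div_of_dvd (hw i) (hdvd i) (hd ▸ lt_univ_sum_of_forall_pos hw i)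
  obtain ⟨s, hs⟩ := hwn
  obtain ⟨k, hk⟩ := hdvd (Fin.last (m + 1))
  obtain ⟨hk2, -, hkL, -⟩ := Flast_exponents hw hκ hk hs
  rw [discriminant_eq_zero_iff a (hw _) hk (by omega)]
  refine ⟨exists_ne_zero_isCriticalPoint_iff hw hκ hk hs,
    fun hD => ⟨existsUnique_isCriticalPoint hw hκ hk hs hD, ?_⟩⟩
  subst hG hJ
  exact finite_and_finrank_quotient_tjurinaIdeal (κ := fun j => d / w j.succ) (fun j => hκ _)
    (Fin.last m) (by rwa [Fin.succ_last, hkL])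

theorem stmt_5 {m : ℕ}
    (w : Fin (m + 2) → ℕ) (hw : ∀ i, 0 < w i)
    (hgcd : Finset.univ.gcd w = 1)
    (d : ℕ) (hd : d = ∑ i, w i) (hdvd : ∀ i, w i ∣ d)
    (hwn : w 0 ∣ w (Fin.last (m + 1)))
    (a : ℂ)
    (G : MvPolynomial (Fin (m + 1)) ℂ)
    (hG : G = 1 + (∑ j : Fin (m + 1), X j ^ (d / w j.succ)) + C a * X (Fin.last m))
    (J : Ideal (MvPolynomial (Fin (m + 1)) ℂ))
    (hJ : J = Ideal.span ({G} ∪ Set.range (fun j : Fin (m + 1) => pderiv j G))) :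
    ((∃ x : Fin (m + 2) → ℂ, x ≠ 0 ∧ ∀ i : Fin (m + 2),
        deriv (fun t : ℂ => Flast d w a (Function.update x i t)) (x i) = 0) ↔
      a ^ (d / w (Fin.last (m + 1))) * (w (Fin.last (m + 1)) : ℂ) *
          ((d - w (Fin.last (m + 1)) : ℕ) : ℂ) ^ (d / w (Fin.last (m + 1)) - 1) +
        (-1 : ℂ) ^ (d / w (Fin.last (m + 1)) - 1) *
          (d : ℂ) ^ (d / w (Fin.last (m + 1))) = 0) ∧
    (a ^ (d / w (Fin.last (m + 1))) * (w (Fin.last (m + 1)) : ℂ) *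
          ((d - w (Fin.last (m + 1)) : ℕ) : ℂ) ^ (d / w (Fin.last (m + 1)) - 1) +
        (-1 : ℂ) ^ (d / w (Fin.last (m + 1)) - 1) *
          (d : ℂ) ^ (d / w (Fin.last (m + 1))) = 0 →
      (∃! x : Fin (m + 2) → ℂ, x 0 = 1 ∧ ∀ i : Fin (m + 2),
          deriv (fun t : ℂ => Flast d w a (Function.update x i t)) (x i) = 0) ∧
      FiniteDimensional ℂ (MvPolynomial (Fin (m + 1)) ℂ ⧸ J) ∧
      Module.finrank ℂ (MvPolynomial (Fin (m + 1)) ℂ ⧸ J) =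
        ∏ j ∈ Finset.univ.filter (fun j : Fin (m + 1) => j ≠ Fin.last m),
          (d / w j.succ - 1)) :=
  stmt_5_general w hw d hd hdvd hwn a G hG J hJ
end

section
/- In the polynomial ring ℚ[a,b,x_2,…,x_n], let G = F(1,x_2,…,x_n) and let J be the ideal generated by G and the partial derivatives ∂G/∂x_2, …, ∂G/∂x_n. Then J contains the following polynomials: (i) (d/w_i)·x_i^{d/w_i} − β_1·b·x_2^{β_2} − d/w_1 for every 3 ≤ i ≤ n; (ii) (d/w_2)·x_2^{d/w_2} + (β_2 − β_1)·b·x_2^{β_2} − d/w_1; (iii) a·x_2 x_3 ⋯ x_n + β_1·b·x_2^{β_2} + d/w_1. -/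
open MvPolynomial

lemma pderiv_prod_X_notmem {σ R : Type*} [CommSemiring R] [DecidableEq σ]
    (j : σ) (s : Finset σ) (h : j ∉ s) :
    pderiv j (∏ k ∈ s, X k : MvPolynomial σ R) = 0 := by
  induction s using Finset.induction with
  | empty => simp
  | @insert k s hk ih =>
    rw [Finset.prod_insert hk, pderiv_mul,
      pderiv_X_of_ne (by rintro rfl; exact h (Finset.mem_insert_self _ _)),
      ih (fun hj => h (Finset.mem_insert_of_mem hj))]
    ring

lemma pderiv_prod_X_univ {σ R : Type*} [CommSemiring R] [Fintype σ] [DecidableEq σ] (j : σ) :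
    pderiv j (∏ k, X k : MvPolynomial σ R) = ∏ k ∈ Finset.univ.erase j, X k := by
  rw [← Finset.mul_prod_erase Finset.univ _ (Finset.mem_univ j), pderiv_mul, pderiv_X_self,
    pderiv_prod_X_notmem j _ (Finset.notMem_erase j Finset.univ)]
  ring

/- Statement 6: for the two-parameter family
F = Σ x_i^{d/w_i} + a·x_1⋯x_n + b·x_1^{β₁}x_2^{β₂} (here n = m+3),
working in ℚ[a,b][x_2,…,x_n] (coefficients R = ℚ[a,b] = MvPolynomial (Fin 2) ℚ,
with a = X 0, b = X 1; the variable X j of the outer ring is x_{j+2}),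
the Tjurina ideal J of G = F(1,x_2,…,x_n) contains the listed polynomials. -/

set_option maxHeartbeats 1000000 in
theorem stmt_6 {m : ℕ}
    (w : Fin (m + 3) → ℕ) (hw : ∀ i, 0 < w i)
    (hgcd : Finset.univ.gcd w = 1)
    (d : ℕ) (hd : d = ∑ i, w i) (hdvd : ∀ i, w i ∣ d)
    (β₁ β₂ : ℕ) (hβ₁ : 0 < β₁) (hβ₂ : 0 < β₂)
    (hβd : β₁ * w 0 + β₂ * w 1 = d)
    (G : MvPolynomial (Fin (m + 2)) (MvPolynomial (Fin 2) ℚ))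
    (hG : G = 1 + (∑ j : Fin (m + 2), X j ^ (d / w j.succ)) +
        C (X 0) * (∏ j : Fin (m + 2), X j) + C (X 1) * X 0 ^ β₂)
    (J : Ideal (MvPolynomial (Fin (m + 2)) (MvPolynomial (Fin 2) ℚ)))
    (hJ : J = Ideal.span ({G} ∪ Set.range (fun j : Fin (m + 2) => pderiv j G))) :
    (∀ j : Fin (m + 2), j ≠ 0 →
      C ((d / w j.succ : ℕ) : MvPolynomial (Fin 2) ℚ) * X j ^ (d / w j.succ) -
        C ((β₁ : MvPolynomial (Fin 2) ℚ) * X 1) * X 0 ^ β₂ -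
        C ((d / w 0 : ℕ) : MvPolynomial (Fin 2) ℚ) ∈ J) ∧
    (C ((d / w 1 : ℕ) : MvPolynomial (Fin 2) ℚ) * X 0 ^ (d / w 1) +
        C (((β₂ : MvPolynomial (Fin 2) ℚ) - (β₁ : MvPolynomial (Fin 2) ℚ)) * X 1) *
          X 0 ^ β₂ -
        C ((d / w 0 : ℕ) : MvPolynomial (Fin 2) ℚ) ∈ J) ∧
    (C (X 0 : MvPolynomial (Fin 2) ℚ) * (∏ j : Fin (m + 2), X j) +
        C ((β₁ : MvPolynomial (Fin 2) ℚ) * X 1) * X 0 ^ β₂ +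
        C ((d / w 0 : ℕ) : MvPolynomial (Fin 2) ℚ) ∈ J) := by
  set R := MvPolynomial (Fin 2) ℚ with hR
  -- basic positivity facts
  have hd0 : 0 < d := by
    refine lt_of_lt_of_le (hw 0) ?_
    rw [hd]
    exact Finset.single_le_sum (f := w) (fun i _ => Nat.zero_le _) (Finset.mem_univ 0)
  have he : ∀ i : Fin (m + 3), 1 ≤ d / w i :=
    fun i => Nat.div_pos (Nat.le_of_dvd hd0 (hdvd i)) (hw i)
  -- derivative formula
  have hD : ∀ j : Fin (m + 2), pderiv j G =
      C ((d / w j.succ : ℕ) : R) * X j ^ (d / w j.succ - 1) +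
      C (X 0) * ∏ k ∈ Finset.univ.erase j, X k +
      (if j = 0 then C ((β₂ : R) * X 1) * X 0 ^ (β₂ - 1) else 0) := by
    intro j
    subst hG
    rw [map_add, map_add, map_add, pderiv_one, map_sum]
    rw [pderiv_C_mul, pderiv_C_mul, pderiv_prod_X_univ]
    have hsum : ∀ k : Fin (m+2),
        pderiv j (X k ^ (d / w k.succ) : MvPolynomial (Fin (m+2)) R) =
        if k = j then ((d / w j.succ : ℕ) : MvPolynomial (Fin (m+2)) R) *
          X j ^ (d / w j.succ - 1) else 0 := by
      intro k
      rw [pderiv_pow]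
      by_cases h : k = j
      · subst h; simp [pderiv_X_self]
      · simp [pderiv_X_of_ne h, h]
    rw [Finset.sum_congr rfl (fun k _ => hsum k), Finset.sum_ite_eq' Finset.univ j,
      if_pos (Finset.mem_univ j), pderiv_pow]
    by_cases h : j = 0
    · subst h
      rw [pderiv_X_self, if_pos rfl]
      simp only [map_mul, map_natCast]
      ring
    · rw [pderiv_X_of_ne (Ne.symm h), if_neg h]
      simp only [map_mul, map_natCast]
      ring
  -- multiplied-by-X_j version
  have hXD : ∀ j : Fin (m + 2), X j * pderiv j G =
      C ((d / w j.succ : ℕ) : R) * X j ^ (d / w j.succ) +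
      C (X 0) * ∏ k : Fin (m + 2), X k +
      (if j = 0 then C ((β₂ : R) * X 1) * X 0 ^ β₂ else 0) := by
    intro j
    rw [hD j]
    have h1 : X j * X j ^ (d / w j.succ - 1) = X (R := R) j ^ (d / w j.succ) := by
      rw [← pow_succ', Nat.sub_add_cancel (he j.succ)]
    have h2 : X j * ∏ k ∈ Finset.univ.erase j, X k = ∏ k : Fin (m + 2), X (R := R) k :=
      Finset.mul_prod_erase Finset.univ _ (Finset.mem_univ j)
    by_cases h : j = 0
    · subst h
      rw [if_pos rfl, if_pos rfl]
      have h3 : X 0 * X 0 ^ (β₂ - 1) = X (R := R) (0 : Fin (m+2)) ^ β₂ := by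
        rw [← pow_succ', Nat.sub_add_cancel hβ₂]
      linear_combination C ((d / w (0 : Fin (m+2)).succ : ℕ) : R) * h1 + C (X 0 : R) * h2 +
        C ((β₂ : R) * X 1) * h3
    · rw [if_neg h, if_neg h, add_zero, add_zero]
      linear_combination C ((d / w j.succ : ℕ) : R) * h1 + C (X 0 : R) * h2
  -- memberships of generators
  have hGJ : G ∈ J := by
    rw [hJ]
    exact Ideal.subset_span (Set.mem_union_left _ rfl)
  have hpJ : ∀ j : Fin (m + 2), pderiv j G ∈ J := by
    intro j
    rw [hJ]
    exact Ideal.subset_span (Set.mem_union_right _ ⟨j, rfl⟩)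
  -- the key Euler identity
  have hkey : C ((w 0 : ℕ) : R) *
      (C (X 0 : R) * (∏ j : Fin (m + 2), X j) + C ((β₁ : R) * X 1) * X 0 ^ β₂ +
        C ((d / w 0 : ℕ) : R)) +
      ∑ j : Fin (m + 2), C ((w j.succ : ℕ) : R) * (X j * pderiv j G) =
      C ((d : ℕ) : R) * G := by
    rw [Finset.sum_congr rfl (fun j _ => by rw [hXD j])]
    simp only [mul_add, Finset.sum_add_distrib]
    have hS1 : ∀ j : Fin (m+2), C ((w j.succ : ℕ) : R) *
        (C ((d / w j.succ : ℕ) : R) * X j ^ (d / w j.succ)) =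
        C ((d : ℕ) : R) * X j ^ (d / w j.succ) := by
      intro j
      rw [← mul_assoc, ← map_mul, ← Nat.cast_mul, Nat.mul_div_cancel' (hdvd j.succ)]
    rw [Finset.sum_congr rfl (fun j _ => hS1 j)]
    have hS2 : ∑ j : Fin (m+2), C ((w j.succ : ℕ) : R) * (C (X 0 : R) * ∏ k : Fin (m+2), X k) =
        C (((∑ j : Fin (m+2), w j.succ : ℕ) : ℕ) : R) * (C (X 0 : R) * ∏ k : Fin (m+2), X k) := by
      rw [← Finset.sum_mul, ← map_sum, Nat.cast_sum]
    rw [hS2]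
    simp only [mul_ite, mul_zero]
    rw [Finset.sum_ite_eq' Finset.univ (0 : Fin (m+2)), if_pos (Finset.mem_univ _),
      Fin.succ_zero_eq_one, hG]
    -- scalar identities
    have hA : C ((w 0 : ℕ) : R) * C ((d / w 0 : ℕ) : R) =
        (C ((d : ℕ) : R) : MvPolynomial (Fin (m+2)) R) := by
      rw [← map_mul, ← Nat.cast_mul, Nat.mul_div_cancel' (hdvd 0)]
    have hB : C ((w 0 : ℕ) : R) + C (((∑ j : Fin (m+2), w j.succ : ℕ) : ℕ) : R) =
        (C ((d : ℕ) : R) : MvPolynomial (Fin (m+2)) R) := by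
      rw [← map_add, ← Nat.cast_add]
      congr 2
      rw [hd]
      exact (Fin.sum_univ_succ w).symm
    have hC : C ((w 0 : ℕ) : R) * C ((β₁ : R) * X 1) +
        C ((w 1 : ℕ) : R) * C ((β₂ : R) * X 1) =
        (C ((d : ℕ) : R) : MvPolynomial (Fin (m+2)) R) * C (X 1 : R) := by
      rw [← map_mul, ← map_mul, ← map_add, ← map_mul]
      congr 1
      have : ((β₁ * w 0 + β₂ * w 1 : ℕ) : R) = ((d : ℕ) : R) := by rw [hβd]
      push_cast at this ⊢
      linear_combination X (R := ℚ) (1 : Fin 2) * this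
    rw [← Finset.mul_sum]
    linear_combination hA + (C (X 0 : R) * ∏ k : Fin (m+2), X k) * hB + (X 0 ^ β₂) * hC
  -- the third element is in J
  have hH : C (X 0 : R) * (∏ j : Fin (m + 2), X j) + C ((β₁ : R) * X 1) * X 0 ^ β₂ +
      C ((d / w 0 : ℕ) : R) ∈ J := by
    have hw0 : ((w 0 : ℚ)) ≠ 0 := Nat.cast_ne_zero.mpr (hw 0).ne'
    have hinv : (C (C ((w 0 : ℚ)⁻¹)) : MvPolynomial (Fin (m+2)) R) * C ((w 0 : ℕ) : R) = 1 := by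
      rw [← map_mul]
      have : (((w 0 : ℕ) : R)) = C ((w 0 : ℚ)) := by simp [hR]
      rw [this, ← map_mul, inv_mul_cancel₀ hw0]
      simp
    have h5 : C ((w 0 : ℕ) : R) *
        (C (X 0 : R) * (∏ j : Fin (m + 2), X j) + C ((β₁ : R) * X 1) * X 0 ^ β₂ +
          C ((d / w 0 : ℕ) : R)) =
        C ((d : ℕ) : R) * G -
          ∑ j : Fin (m + 2), C ((w j.succ : ℕ) : R) * (X j * pderiv j G) :=
      eq_sub_of_add_eq hkey
    have heq : C (X 0 : R) * (∏ j : Fin (m + 2), X j) + C ((β₁ : R) * X 1) * X 0 ^ β₂ +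
        C ((d / w 0 : ℕ) : R) =
        C (C ((w 0 : ℚ)⁻¹)) * (C ((d : ℕ) : R) * G -
          ∑ j : Fin (m + 2), C ((w j.succ : ℕ) : R) * (X j * pderiv j G)) := by
      rw [← h5, ← mul_assoc, hinv, one_mul]
    rw [heq]
    refine Ideal.mul_mem_left _ _ (Ideal.sub_mem _ (Ideal.mul_mem_left _ _ hGJ)
      (Ideal.sum_mem _ fun j _ => Ideal.mul_mem_left _ _ (Ideal.mul_mem_left _ _ (hpJ j))))
  refine ⟨?_, ?_, hH⟩
  · intro j hj
    have heq : C ((d / w j.succ : ℕ) : R) * X j ^ (d / w j.succ) -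
        C ((β₁ : R) * X 1) * X 0 ^ β₂ - C ((d / w 0 : ℕ) : R) =
        X j * pderiv j G -
        (C (X 0 : R) * (∏ k : Fin (m + 2), X k) + C ((β₁ : R) * X 1) * X 0 ^ β₂ +
          C ((d / w 0 : ℕ) : R)) := by
      rw [hXD j, if_neg hj]
      ring
    rw [heq]
    exact Ideal.sub_mem _ (Ideal.mul_mem_left _ _ (hpJ j)) hH
  · have heq : C ((d / w 1 : ℕ) : R) * X 0 ^ (d / w 1) +
        C (((β₂ : R) - (β₁ : R)) * X 1) * X 0 ^ β₂ - C ((d / w 0 : ℕ) : R) =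
        X 0 * pderiv 0 G -
        (C (X 0 : R) * (∏ k : Fin (m + 2), X k) + C ((β₁ : R) * X 1) * X 0 ^ β₂ +
          C ((d / w 0 : ℕ) : R)) := by
      rw [hXD 0, if_pos rfl, Fin.succ_zero_eq_one, sub_mul, map_sub]
      ring
    rw [heq]
    exact Ideal.sub_mem _ (Ideal.mul_mem_left _ _ (hpJ 0)) hH
end

section
/- In the polynomial ring ℚ[a,b,x_2,…,x_n], let G = F(1,x_2,…,x_n) and let J be the ideal generated by G and the partial derivatives ∂G/∂x_2, …, ∂G/∂x_n. Then the polynomial x_2^{d/w_2} + b·x_2^{β_2} + 1 lies in the ideal J + ⟨ β_1·b·x_2^{β_2} + d/w_1 ⟩. (This yields the line components of the discriminant, which are determined by the discriminant of x^{d/w_2} + b·x^{β_2} + 1.) -/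
open MvPolynomial Finset

lemma pderiv_prodX_notmem {σ R : Type*} [CommSemiring R] [DecidableEq σ]
    {s : Finset σ} {j : σ} (h : j ∉ s) :
    pderiv j (∏ k ∈ s, (X k : MvPolynomial σ R)) = 0 := by
  induction s using Finset.induction with
  | empty => simp
  | @insert a s ha ih =>
    rw [Finset.prod_insert ha, pderiv_mul,
      ih (fun hj => h (Finset.mem_insert_of_mem hj)),
      pderiv_X_of_ne (by rintro rfl; exact h (Finset.mem_insert_self _ _))]
    ring

lemma pderiv_prodX_univ {σ R : Type*} [CommSemiring R] [DecidableEq σ] [Fintype σ] (j : σ) :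
    pderiv j (∏ k, (X k : MvPolynomial σ R)) = ∏ k ∈ Finset.univ.erase j, X k := by
  rw [← Finset.mul_prod_erase Finset.univ X (Finset.mem_univ j), pderiv_mul,
    pderiv_prodX_notmem (Finset.notMem_erase j _), pderiv_X_self]
  ring

/-- Abbreviation for the ambient polynomial ring. -/
abbrev PolyR (m : ℕ) : Type := MvPolynomial (Fin (m + 2)) (MvPolynomial (Fin 2) ℚ)

set_option maxHeartbeats 1000000 in
theorem stmt_8 {m : ℕ}
    (w : Fin (m + 3) → ℕ) (hw : ∀ i, 0 < w i)
    (hgcd : Finset.univ.gcd w = 1)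
    (d : ℕ) (hd : d = ∑ i, w i) (hdvd : ∀ i, w i ∣ d)
    (β₁ β₂ : ℕ) (hβ₁ : 0 < β₁) (hβ₂ : 0 < β₂)
    (hβd : β₁ * w 0 + β₂ * w 1 = d)
    (G : MvPolynomial (Fin (m + 2)) (MvPolynomial (Fin 2) ℚ))
    (hG : G = 1 + (∑ j : Fin (m + 2), X j ^ (d / w j.succ)) +
        C (X 0) * (∏ j : Fin (m + 2), X j) + C (X 1) * X 0 ^ β₂)
    (J : Ideal (MvPolynomial (Fin (m + 2)) (MvPolynomial (Fin 2) ℚ)))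
    (hJ : J = Ideal.span ({G} ∪ Set.range (fun j : Fin (m + 2) => pderiv j G)))
    (P : MvPolynomial (Fin (m + 2)) (MvPolynomial (Fin 2) ℚ))
    (hP : P = C ((β₁ : MvPolynomial (Fin 2) ℚ) * X 1) * X 0 ^ β₂ +
        C ((d / w 0 : ℕ) : MvPolynomial (Fin 2) ℚ)) :
    X 0 ^ (d / w 1) + C (X 1 : MvPolynomial (Fin 2) ℚ) * X 0 ^ β₂ + 1 ∈
      J + Ideal.span {P} := by
  -- numerology
  have hd0 : 0 < d := hd ▸ Finset.sum_pos (fun i _ => hw i) ⟨0, Finset.mem_univ 0⟩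
  have he : ∀ j : Fin (m + 2), w j.succ * (d / w j.succ) = d :=
    fun j => Nat.mul_div_cancel' (hdvd j.succ)
  have hepos : ∀ j : Fin (m + 2), 0 < d / w j.succ :=
    fun j => Nat.div_pos (Nat.le_of_dvd hd0 (hdvd j.succ)) (hw j.succ)
  have hq0 : w 0 * (d / w 0) = d := Nat.mul_div_cancel' (hdvd 0)
  have he1 : w 1 * (d / w 1) = d := Nat.mul_div_cancel' (hdvd 1)
  have hcnat : w 0 + ∑ j : Fin (m + 2), w j.succ = d := by
    rw [hd]; exact (Fin.sum_univ_succ w).symm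
  -- membership preliminaries
  have hGI : G ∈ J + Ideal.span {P} := by
    rw [Submodule.add_eq_sup]
    exact Ideal.mem_sup_left (hJ ▸ Ideal.subset_span (Set.mem_union_left _ rfl))
  have hDI : ∀ j : Fin (m + 2), pderiv j G ∈ J + Ideal.span {P} := by
    intro j
    rw [Submodule.add_eq_sup]
    exact Ideal.mem_sup_left (hJ ▸ Ideal.subset_span (Set.mem_union_right _ ⟨j, rfl⟩))
  have hPI : P ∈ J + Ideal.span {P} := by
    rw [Submodule.add_eq_sup]
    exact Ideal.mem_sup_right (Ideal.subset_span rfl)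
  -- derivative formula
  have hpd : ∀ j : Fin (m + 2), pderiv j G
      = ((d / w j.succ : ℕ) : PolyR m) * X j ^ (d / w j.succ - 1)
      + C (X 0) * ∏ k ∈ Finset.univ.erase j, X k
      + (if j = 0 then (β₂ : PolyR m) * X 0 ^ (β₂ - 1) * C (X 1) else 0) := by
    intro j
    rw [hG]
    rw [map_add, map_add, map_add, pderiv_one, map_sum, pderiv_C_mul, pderiv_C_mul,
      pderiv_prodX_univ, pderiv_pow, Finset.sum_eq_single j (fun k _ hk => by
        rw [pderiv_pow, pderiv_X_of_ne hk]; ring) (by simp)]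
    rw [pderiv_pow, pderiv_X_self]
    by_cases hj : j = 0
    · subst hj; rw [pderiv_X_self, if_pos rfl]; ring
    · rw [pderiv_X_of_ne (Ne.symm hj), if_neg hj]; ring
  -- helper identities
  have hpow : ∀ (j : Fin (m + 2)) (n : ℕ), 0 < n →
      (X j : PolyR m) * X j ^ (n - 1) = X j ^ n := by
    intro j n hn
    obtain ⟨k, rfl⟩ : ∃ k, n = k + 1 := ⟨n - 1, by omega⟩
    rw [Nat.add_sub_cancel, pow_succ]; ring
  have hApow : ∀ j : Fin (m + 2),
      (X j : PolyR m) * ∏ k ∈ Finset.univ.erase j, X k = ∏ k : Fin (m + 2), X k :=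
    fun j => Finset.mul_prod_erase _ _ (Finset.mem_univ j)
  have hXd : ∀ j : Fin (m + 2), X j * pderiv j G
      = ((d / w j.succ : ℕ) : PolyR m) * X j ^ (d / w j.succ)
      + C (X 0) * (∏ k : Fin (m + 2), X k)
      + (if j = 0 then (β₂ : PolyR m) * (C (X 1) * X 0 ^ β₂) else 0) := by
    intro j
    rw [hpd j]
    by_cases hj : j = 0
    · subst hj
      rw [if_pos rfl, if_pos rfl]
      linear_combination ((d / w (0 : Fin (m + 2)).succ : ℕ) : PolyR m)
          * hpow 0 (d / w (0 : Fin (m + 2)).succ) (hepos 0)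
        + C (X 0 : MvPolynomial (Fin 2) ℚ) * hApow 0
        + (β₂ : PolyR m) * C (X 1 : MvPolynomial (Fin 2) ℚ) * hpow 0 β₂ hβ₂
    · rw [if_neg hj, if_neg hj]
      linear_combination ((d / w j.succ : ℕ) : PolyR m)
          * hpow j (d / w j.succ) (hepos j)
        + C (X 0 : MvPolynomial (Fin 2) ℚ) * hApow j
  -- the Euler-type sum
  have hSmem : (∑ j : Fin (m + 2), (w j.succ : PolyR m) * (X j * pderiv j G))
      ∈ J + Ideal.span {P} :=
    Ideal.sum_mem _ fun j _ =>
      Ideal.mul_mem_left _ _ (Ideal.mul_mem_left _ _ (hDI j))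
  have hSval : (∑ j : Fin (m + 2), (w j.succ : PolyR m) * (X j * pderiv j G))
      = (d : PolyR m) * (∑ j : Fin (m + 2), X j ^ (d / w j.succ))
      + (∑ j : Fin (m + 2), (w j.succ : PolyR m)) * (C (X 0) * (∏ k : Fin (m + 2), X k))
      + (w 1 : PolyR m) * (β₂ : PolyR m) * (C (X 1) * X 0 ^ β₂) := by
    have hterm : ∀ j : Fin (m + 2), (w j.succ : PolyR m) * (X j * pderiv j G)
        = (d : PolyR m) * X j ^ (d / w j.succ)
        + (w j.succ : PolyR m) * (C (X 0) * (∏ k : Fin (m + 2), X k))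
        + (if j = 0 then (w 1 : PolyR m) * (β₂ : PolyR m) * (C (X 1) * X 0 ^ β₂) else 0) := by
      intro j
      rw [hXd j]
      by_cases hj : j = 0
      · subst hj
        rw [if_pos rfl, if_pos rfl]
        have hwd : (w (0 : Fin (m + 2)).succ : PolyR m)
            * ((d / w (0 : Fin (m + 2)).succ : ℕ) : PolyR m) = (d : PolyR m) := by
          rw [← Nat.cast_mul, he 0]
        have h1 : (w (0 : Fin (m + 2)).succ : PolyR m) = (w 1 : PolyR m) := rfl
        linear_combination (X (0 : Fin (m + 2)) ^ (d / w (0 : Fin (m + 2)).succ)) * hwd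
          + ((β₂ : PolyR m) * (C (X 1 : MvPolynomial (Fin 2) ℚ) * X 0 ^ β₂)) * h1
      · rw [if_neg hj, if_neg hj]
        have hwd : (w j.succ : PolyR m) * ((d / w j.succ : ℕ) : PolyR m) = (d : PolyR m) := by
          rw [← Nat.cast_mul, he j]
        linear_combination (X j ^ (d / w j.succ)) * hwd
    rw [Finset.sum_congr rfl (fun j _ => hterm j), Finset.sum_add_distrib,
      Finset.sum_add_distrib, ← Finset.mul_sum, ← Finset.sum_mul,
      Finset.sum_ite_eq' Finset.univ (0 : Fin (m + 2))
        (fun _ => (w 1 : PolyR m) * (β₂ : PolyR m) * (C (X 1) * X 0 ^ β₂)),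
      if_pos (Finset.mem_univ _)]
  have hX0d : X 0 * pderiv 0 G
      = ((d / w 1 : ℕ) : PolyR m) * X 0 ^ (d / w 1)
      + C (X 0) * (∏ k : Fin (m + 2), X k)
      + (β₂ : PolyR m) * (C (X 1) * X 0 ^ β₂) := by
    have := hXd 0
    rw [if_pos rfl] at this
    exact this
  have hP' : P = (β₁ : PolyR m) * (C (X 1) * X 0 ^ β₂) + ((d / w 0 : ℕ) : PolyR m) := by
    rw [hP, map_mul, map_natCast, map_natCast]; ring
  -- cast relations
  have r1 : (β₁ : PolyR m) * (w 0 : PolyR m) + (β₂ : PolyR m) * (w 1 : PolyR m)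
      = (d : PolyR m) := by
    rw [← Nat.cast_mul, ← Nat.cast_mul, ← Nat.cast_add, hβd]
  have r2 : (w 0 : PolyR m) + (∑ j : Fin (m + 2), (w j.succ : PolyR m)) = (d : PolyR m) := by
    rw [← Nat.cast_sum, ← Nat.cast_add, hcnat]
  have r3 : (w 1 : PolyR m) * ((d / w 1 : ℕ) : PolyR m) = (d : PolyR m) := by
    rw [← Nat.cast_mul, he1]
  have r4 : (w 0 : PolyR m) * ((d / w 0 : ℕ) : PolyR m) = (d : PolyR m) := by
    rw [← Nat.cast_mul, hq0]
  -- the key identity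
  have key : ((d : PolyR m) * (w 0 : PolyR m))
        * (X 0 ^ (d / w 1) + C (X 1 : MvPolynomial (Fin 2) ℚ) * X 0 ^ β₂ + 1)
      = (w 1 : PolyR m) * (∑ j : Fin (m + 2), (w j.succ : PolyR m) * (X j * pderiv j G))
        + ((w 0 : PolyR m) * (w 1 : PolyR m)) * (X 0 * pderiv 0 G)
        + ((w 0 : PolyR m) * ((w 0 : PolyR m) + (w 1 : PolyR m))) * P
        - ((d : PolyR m) * (w 1 : PolyR m)) * G := by
    rw [hSval, hX0d, hP', hG]
    linear_combination (-(((w 0 : PolyR m)) * X (0 : Fin (m + 2)) ^ (d / w 1))) * r3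
      - ((w 0 : PolyR m) + (w 1 : PolyR m)) * r4
      - ((w 1 : PolyR m) * (C (X 0 : MvPolynomial (Fin 2) ℚ)
          * (∏ k : Fin (m + 2), X k))) * r2
      - (((w 0 : PolyR m) + (w 1 : PolyR m))
          * (C (X 1 : MvPolynomial (Fin 2) ℚ) * X 0 ^ β₂)) * r1
  have hTmul : ((d : PolyR m) * (w 0 : PolyR m))
      * (X 0 ^ (d / w 1) + C (X 1 : MvPolynomial (Fin 2) ℚ) * X 0 ^ β₂ + 1)
      ∈ J + Ideal.span {P} := by
    rw [key]
    exact sub_mem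
      (add_mem (add_mem (Ideal.mul_mem_left _ _ hSmem)
        (Ideal.mul_mem_left _ _ (Ideal.mul_mem_left _ _ (hDI 0))))
        (Ideal.mul_mem_left _ _ hPI))
      (Ideal.mul_mem_left _ _ hGI)
  -- cancel the nonzero rational constant
  have hne : ((d * w 0 : ℕ) : ℚ) ≠ 0 :=
    Nat.cast_ne_zero.mpr (Nat.mul_pos hd0 (hw 0)).ne'
  have hcast : ((d : PolyR m) * (w 0 : PolyR m)) = C (C ((d * w 0 : ℕ) : ℚ)) := by
    rw [← Nat.cast_mul, ← map_natCast (C : MvPolynomial (Fin 2) ℚ →+* PolyR m),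
      ← map_natCast (C : ℚ →+* MvPolynomial (Fin 2) ℚ)]
  have hfin : (X 0 ^ (d / w 1) + C (X 1 : MvPolynomial (Fin 2) ℚ) * X 0 ^ β₂ + 1 : PolyR m)
      = C (C (((d * w 0 : ℕ) : ℚ)⁻¹))
        * (((d : PolyR m) * (w 0 : PolyR m))
          * (X 0 ^ (d / w 1) + C (X 1 : MvPolynomial (Fin 2) ℚ) * X 0 ^ β₂ + 1)) := by
    rw [hcast, ← mul_assoc, ← map_mul, ← map_mul, inv_mul_cancel₀ hne, map_one, map_one,
      one_mul]
  rw [hfin]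
  exact Ideal.mul_mem_left _ _ hTmul
end

section
/- Let β_1,…,β_n be nonnegative integers with 0 ≤ β_i < d/w_i for all i and Σ_{i=1}^n β_i w_i = d, let β denote the corresponding element of the group G = ∏_{i=1}^n ℤ/(d/w_i)ℤ, and set γ_β = gcd{ β_i w_i : 1 ≤ i ≤ n, β_i ≠ 0 }. Then: (i) the additive order of β in G equals d_β := d/γ_β; (ii) the set M is invariant under translation by β; and (iii) every orbit of the translation action of the cyclic subgroup generated by β on M has exactly d_β elements, so the number of orbits (strong β-equivalence classes) equals |M| · γ_β / d. -/
/- Statement 9: for β ∈ M with l(β) = 1, the order of β in ∏ ℤ/(d/w_i)ℤ is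
d_β = d/γ_β, translation by β preserves M, every orbit has d_β elements and
the number of orbits (strong β-equivalence classes) is |M|·γ_β/d. -/

theorem stmt_9 {n : ℕ} (hn : 1 ≤ n)
    (w : Fin n → ℕ) (hw : ∀ i, 0 < w i)
    (d : ℕ) (hd : d = ∑ i, w i) (hdvd : ∀ i, w i ∣ d)
    (β : Fin n → ℕ) (hβlt : ∀ i, β i < d / w i)
    (hβd : ∑ i, β i * w i = d)
    (γβ : ℕ) (hγ : γβ = Finset.univ.gcd (fun i => β i * w i))
    (M : Set (∀ i : Fin n, ZMod (d / w i)))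
    (hM : M = {x | d ∣ ∑ i, w i * (x i).val})
    (βg : ∀ i : Fin n, ZMod (d / w i))
    (hβg : βg = fun i => ((β i : ℕ) : ZMod (d / w i)))
    (orb : (∀ i : Fin n, ZMod (d / w i)) → Set (∀ i : Fin n, ZMod (d / w i)))
    (horb : orb = fun x => {y | ∃ t : ℕ, y = x + t • βg}) :
    addOrderOf βg = d / γβ ∧
    (∀ x ∈ M, x + βg ∈ M) ∧
    (∀ x ∈ M, (orb x).ncard = d / γβ) ∧
    {S : Set (∀ i : Fin n, ZMod (d / w i)) | ∃ x ∈ M, S = orb x}.ncard * (d / γβ) =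
      M.ncard := by
  classical
  have hne : Nonempty (Fin n) := ⟨⟨0, hn⟩⟩
  have hd0 : 0 < d := by
    rw [hd]; exact Finset.sum_pos (fun i _ => hw i) Finset.univ_nonempty
  have hdw : ∀ i, 0 < d / w i := fun i =>
    Nat.div_pos (Nat.le_of_dvd hd0 (hdvd i)) (hw i)
  haveI : ∀ i, NeZero (d / w i) := fun i => ⟨(hdw i).ne'⟩
  haveI : NeZero d := ⟨hd0.ne'⟩
  have hγ0 : 0 < γβ := by
    rcases Nat.eq_zero_or_pos γβ with h | h
    · exfalso
      rw [hγ, Finset.gcd_eq_zero_iff] at h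
      rw [Finset.sum_congr rfl (fun i _ => h i (Finset.mem_univ i)),
        Finset.sum_const_zero] at hβd
      exact hd0.ne' hβd.symm
    · exact h
  have hγd : γβ ∣ d := by
    rw [hγ, ← hβd]
    exact Finset.dvd_sum fun i _ => Finset.gcd_dvd (Finset.mem_univ i)
  set k := d / γβ with hk
  have hk0 : 0 < k := Nat.div_pos (Nat.le_of_dvd hd0 hγd) hγ0
  -- key smul characterization
  have hsmul : ∀ t : ℕ, t • βg = 0 ↔ k ∣ t := by
    intro t
    have h1 : t • βg = 0 ↔ ∀ i, d ∣ t * (β i * w i) := by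
      rw [funext_iff]
      refine forall_congr' fun i => ?_
      rw [hβg]
      simp only [Pi.smul_apply, Pi.zero_apply, nsmul_eq_mul]
      rw [show (t : ZMod (d / w i)) * (β i : ZMod (d / w i)) = ((t * β i : ℕ) : ZMod (d / w i)) by push_cast; ring]
      rw [ZMod.natCast_eq_zero_iff]
      rw [← Nat.mul_dvd_mul_iff_right (hw i), Nat.div_mul_cancel (hdvd i), mul_assoc]
    rw [h1]
    have h2 : (∀ i, d ∣ t * (β i * w i)) ↔ d ∣ t * γβ := by
      constructor
      · intro h
        have hg := Finset.dvd_gcd (s := (Finset.univ : Finset (Fin n)))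
          (f := fun i => t * (β i * w i)) fun i _ => h i
        rwa [Finset.gcd_mul_left, normalize_eq, ← hγ] at hg
      · intro h i
        exact h.trans (mul_dvd_mul_left t (hγ ▸ Finset.gcd_dvd (Finset.mem_univ i)))
    rw [h2, ← Nat.div_mul_cancel hγd, hk, Nat.mul_dvd_mul_iff_right hγ0]
  have horder : addOrderOf βg = k :=
    Nat.dvd_antisymm (addOrderOf_dvd_of_nsmul_eq_zero ((hsmul _).2 dvd_rfl))
      ((hsmul _).1 (addOrderOf_nsmul_eq_zero βg))
  -- βg values
  have hβgval : ∀ i, (βg i).val = β i := by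
    intro i
    rw [hβg, ZMod.val_natCast, Nat.mod_eq_of_lt (hβlt i)]
  -- translation invariance
  have hstep : ∀ x ∈ M, x + βg ∈ M := by
    intro x hx
    rw [hM] at hx ⊢
    rw [Set.mem_setOf_eq, ← ZMod.natCast_eq_zero_iff] at hx ⊢
    have hcast : ∀ i, ((w i * ((x + βg) i).val : ℕ) : ZMod d)
        = ((w i * ((x i).val + (βg i).val) : ℕ) : ZMod d) := by
      intro i
      rw [ZMod.natCast_eq_natCast_iff]
      have h1 : ((x + βg) i).val ≡ (x i).val + (βg i).val [MOD d / w i] := by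
        rw [Pi.add_apply, ZMod.val_add]
        exact (Nat.mod_modEq _ _)
      have h2 := h1.mul_left' (w i)
      rwa [Nat.mul_div_cancel' (hdvd i)] at h2
    calc ((∑ i, w i * ((x + βg) i).val : ℕ) : ZMod d)
        = ∑ i, ((w i * ((x + βg) i).val : ℕ) : ZMod d) := by push_cast; ring
      _ = ∑ i, ((w i * ((x i).val + (βg i).val) : ℕ) : ZMod d) :=
          Finset.sum_congr rfl fun i _ => hcast i
      _ = ((∑ i, w i * (x i).val : ℕ) : ZMod d) + ((∑ i, β i * w i : ℕ) : ZMod d) := by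
          simp only [hβgval]
          push_cast
          rw [← Finset.sum_add_distrib]
          exact Finset.sum_congr rfl fun i _ => by ring
      _ = 0 := by rw [hx, hβd, ZMod.natCast_self, add_zero]
  have hMiter : ∀ x ∈ M, ∀ t : ℕ, x + t • βg ∈ M := by
    intro x hx t
    induction t with
    | zero => simpa using hx
    | succ t ih =>
      have := hstep _ ih
      rwa [add_assoc, ← succ_nsmul] at this
  -- orbit transitivity
  have horbmem : ∀ x, x ∈ orb x := by
    intro x; rw [horb]; exact ⟨0, by simp⟩
  have horbtrans : ∀ x y, y ∈ orb x → orb y = orb x := by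
    intro x y hy
    rw [horb] at hy
    obtain ⟨t, rfl⟩ := hy
    ext z
    rw [horb]
    constructor
    · rintro ⟨s, rfl⟩
      exact ⟨t + s, by rw [add_nsmul, add_assoc]⟩
    · rintro ⟨s, rfl⟩
      refine ⟨t * (k - 1) + s, ?_⟩
      have hle : t ≤ t * k := Nat.le_mul_of_pos_right t hk0
      have hz : (t + t * (k - 1)) • βg = 0 := by
        rw [hsmul, Nat.mul_sub, mul_one]
        have : t + (t * k - t) = t * k := by omega
        rw [this]
        exact dvd_mul_left k t
      have hx : x + t • βg + (t * (k - 1)) • βg = x := by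
        rw [add_assoc, ← add_nsmul, hz, add_zero]
      rw [add_nsmul, ← add_assoc, hx]
  -- orbit cardinality
  have horbcard : ∀ x, (orb x).ncard = k := by
    intro x
    have himg : orb x = (fun t : ℕ => x + t • βg) '' Set.Iio k := by
      rw [horb]
      ext y
      constructor
      · rintro ⟨t, rfl⟩
        refine ⟨t % k, Nat.mod_lt _ hk0, ?_⟩
        have hz : (k * (t / k)) • βg = 0 := (hsmul _).2 ⟨t / k, rfl⟩
        have heq : t • βg = (t % k) • βg := by
          conv_lhs => rw [← Nat.mod_add_div t k]
          rw [add_nsmul, hz, add_zero]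
        show x + (t % k) • βg = x + t • βg
        rw [heq]
      · rintro ⟨t, _, rfl⟩
        exact ⟨t, rfl⟩
    rw [himg]
    rw [Set.ncard_image_of_injOn]
    · rw [show Set.Iio k = ↑(Finset.range k) by ext a; simp [Finset.mem_range]]
      rw [Set.ncard_coe_finset, Finset.card_range]
    · intro s hs t ht hst
      simp only [add_right_inj] at hst
      have hmod := nsmul_eq_nsmul_iff_modEq.mp hst
      rw [horder] at hmod
      rw [Nat.ModEq] at hmod
      rwa [Nat.mod_eq_of_lt hs, Nat.mod_eq_of_lt ht] at hmod
  refine ⟨horder, hstep, fun x _ => horbcard x, ?_⟩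
  -- counting orbits
  have hMfin : M.Finite := Set.toFinite M
  set Mf := hMfin.toFinset with hMf
  set Of := Mf.image orb with hOf
  have hfiber : ∀ S ∈ Of, (Mf.filter (fun y => orb y = S)).card = k := by
    intro S hS
    rw [Finset.mem_image] at hS
    obtain ⟨x₀, hx₀, rfl⟩ := hS
    rw [hMf, Set.Finite.mem_toFinset] at hx₀
    have hset : (↑(Mf.filter (fun y => orb y = orb x₀)) : Set _) = orb x₀ := by
      ext y
      simp only [Finset.coe_filter, Set.mem_setOf_eq, hMf, Set.Finite.mem_toFinset]
      constructor
      · rintro ⟨_, hy⟩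
        rw [← hy]; exact horbmem y
      · intro hy
        refine ⟨?_, horbtrans _ _ hy⟩
        rw [horb] at hy
        obtain ⟨t, rfl⟩ := hy
        exact hMiter _ hx₀ t
    have := congrArg Set.ncard hset
    rwa [Set.ncard_coe_finset, horbcard] at this
  have hcount := Finset.card_eq_sum_card_fiberwise
    (f := orb) (s := Mf) (t := Of) (fun x hx => Finset.mem_image_of_mem _ hx)
  rw [Finset.sum_congr rfl hfiber, Finset.sum_const, smul_eq_mul] at hcount
  have hOset : {S : Set (∀ i : Fin n, ZMod (d / w i)) | ∃ x ∈ M, S = orb x} = ↑Of := by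
    ext S
    simp only [Set.mem_setOf_eq, hOf, Finset.coe_image, Set.mem_image, Finset.mem_coe,
      hMf, Set.Finite.mem_toFinset]
    exact ⟨fun ⟨x, hx, h⟩ => ⟨x, hx, h.symm⟩, fun ⟨x, hx, h⟩ => ⟨x, hx, h.symm⟩⟩
  rw [hOset, Set.ncard_coe_finset, ← hcount, hMf]
  rw [Set.ncard_eq_toFinset_card _ hMfin]
end

section
/- If gcd(w_1,…,w_n) = 1, then the cardinality of M equals (1/d) · ∏_{i=1}^n (d/w_i). -/
/-!
Since `w i * (d / w i) = d`, the map `x ↦ ∑ i, w i * x i` is a well-defined additive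
homomorphism `∏ i, ZMod (d / w i) → ZMod d`, and `M` is its kernel. Its image contains every
`w i`, hence by Bézout `gcd w = 1`, so it is onto and `|M| * d = ∏ i, d / w i`.
-/

open Finset

variable {ι : Type*}

theorem Finset.sum_ne_zero_of_gcd_eq_one {s : Finset ι} {w : ι → ℕ} (h : s.gcd w = 1) :
    ∑ i ∈ s, w i ≠ 0 := by
  intro h0
  rw [Finset.sum_eq_zero_iff] at h0
  rw [Finset.gcd_eq_zero_iff.mpr h0] at h
  exact zero_ne_one h

theorem Finset.natCast_gcd (s : Finset ι) (w : ι → ℕ) :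
    ((s.gcd w : ℕ) : ℤ) = s.gcd fun i ↦ (w i : ℤ) := by
  classical
  induction s using Finset.induction with
  | empty => simp
  | insert a s ha ih =>
    rw [gcd_insert, gcd_insert, ← ih, ← Int.coe_gcd, Int.gcd_natCast_natCast]
    rfl

theorem Finset.exists_natCast_gcd_eq_sum_mul (s : Finset ι) (w : ι → ℕ) :
    ∃ c : ι → ℤ, ((s.gcd w : ℕ) : ℤ) = ∑ i ∈ s, w i * c i := by
  rw [natCast_gcd]
  exact gcd_eq_sum_mul s _

theorem AddSubgroup.mem_of_nsmul_mem_of_gcd_eq_one {G : Type*} [AddCommGroup G]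
    (H : AddSubgroup G) {g : G} {s : Finset ι} {w : ι → ℕ} (hgcd : s.gcd w = 1)
    (hmem : ∀ i ∈ s, w i • g ∈ H) : g ∈ H := by
  obtain ⟨c, hc⟩ := s.exists_natCast_gcd_eq_sum_mul w
  rw [hgcd, Nat.cast_one] at hc
  have hg : g = ∑ i ∈ s, c i • w i • g :=
    calc g = (∑ i ∈ s, (w i : ℤ) * c i) • g := by rw [← hc, one_zsmul]
      _ = _ := by simp only [Finset.sum_smul, mul_comm _ (c _), mul_smul, natCast_zsmul]
  rw [hg]
  exact sum_mem fun i hi ↦ zsmul_mem (hmem i hi) _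

theorem AddMonoidHom.card_ker_mul_card_of_surjective {G G' : Type*} [AddGroup G] [AddGroup G']
    (f : G →+ G') (hf : Function.Surjective f) : Nat.card f.ker * Nat.card G' = Nat.card G := by
  rw [← f.ker.card_mul_index, AddSubgroup.index_ker, f.range_eq_top.mpr hf, AddSubgroup.card_top]

theorem NeZero.div_of_dvd {d k : ℕ} [NeZero d] (hk : k ∣ d) : NeZero (d / k) :=
  ⟨Nat.div_ne_zero_iff.mpr
    ⟨by rintro rfl; exact NeZero.ne d (zero_dvd_iff.mp hk), Nat.le_of_dvd (NeZero.pos d) hk⟩⟩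

namespace ZMod

def scaleHom {d k : ℕ} (hk : k ∣ d) : ZMod (d / k) →+ ZMod d :=
  lift (d / k) ⟨zmultiplesHom (ZMod d) (k : ZMod d), by
    rw [zmultiplesHom_apply, natCast_zsmul, nsmul_eq_mul, ← Nat.cast_mul, Nat.div_mul_cancel hk,
      natCast_self]⟩

theorem scaleHom_apply {d k : ℕ} (hk : k ∣ d) [NeZero (d / k)] (a : ZMod (d / k)) :
    scaleHom hk a = ((k * a.val : ℕ) : ZMod d) := by
  conv_lhs => rw [← natCast_zmod_val a, ← Int.cast_natCast]
  rw [scaleHom, lift_coe, zmultiplesHom_apply, natCast_zsmul, nsmul_eq_mul, mul_comm,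
    Nat.cast_mul]

theorem scaleHom_one {d k : ℕ} (hk : k ∣ d) : scaleHom hk 1 = k := by
  rw [← Int.cast_one, scaleHom, lift_coe, zmultiplesHom_apply, one_zsmul]

variable [Fintype ι] {d : ℕ} (w : ι → ℕ) (hw : ∀ i, w i ∣ d)

def weightedSumHom : (∀ i, ZMod (d / w i)) →+ ZMod d :=
  ∑ i, (scaleHom (hw i)).comp (Pi.evalAddMonoidHom _ i)

theorem weightedSumHom_apply [NeZero d] (x : ∀ i, ZMod (d / w i)) :
    weightedSumHom w hw x = ((∑ i, w i * (x i).val : ℕ) : ZMod d) := by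
  have := fun i ↦ NeZero.div_of_dvd (hw i)
  simp [weightedSumHom, scaleHom_apply]

theorem weightedSumHom_single [DecidableEq ι] (i : ι) :
    weightedSumHom w hw (Pi.single i 1) = w i := by
  rw [weightedSumHom, AddMonoidHom.finsetSum_apply, Finset.sum_eq_single i]
  · simp [scaleHom_one]
  · intro j _ hj
    simp [Pi.single_eq_of_ne hj]
  · simp

theorem weightedSumHom_surjective (hgcd : univ.gcd w = 1) :
    Function.Surjective (weightedSumHom w hw) := by
  classical
  have hone : (1 : ZMod d) ∈ (weightedSumHom w hw).range :=
    AddSubgroup.mem_of_nsmul_mem_of_gcd_eq_one _ hgcd fun i _ ↦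
      ⟨Pi.single i 1, by rw [weightedSumHom_single, nsmul_one]⟩
  intro z
  rw [← intCast_zmod_cast z, ← zsmul_one]
  exact AddSubgroup.zsmul_mem _ hone _

end ZMod

theorem stmt_10_general {n : ℕ}
    (w : Fin n → ℕ)
    (d : ℕ) (hd : d = ∑ i, w i) (hdvd : ∀ i, w i ∣ d)
    (hgcd : Finset.univ.gcd w = 1)
    (M : Set (∀ i : Fin n, ZMod (d / w i)))
    (hM : M = {x | d ∣ ∑ i, w i * (x i).val}) :
    M.Finite ∧ M.ncard * d = ∏ i, (d / w i) := by
  have : NeZero d := ⟨hd ▸ sum_ne_zero_of_gcd_eq_one hgcd⟩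
  have := fun i ↦ NeZero.div_of_dvd (hdvd i)
  have hM_ker : M = (ZMod.weightedSumHom w hdvd).ker := by
    rw [hM]
    ext x
    rw [SetLike.mem_coe, AddMonoidHom.mem_ker, ZMod.weightedSumHom_apply, ZMod.natCast_eq_zero_iff]
    rfl
  refine ⟨M.toFinite, ?_⟩
  calc M.ncard * d = Nat.card (ZMod.weightedSumHom w hdvd).ker * Nat.card (ZMod d) := by
        rw [← Nat.card_coe_set_eq, hM_ker, Nat.card_zmod]
        rfl
    _ = ∏ i, (d / w i) := by
        rw [AddMonoidHom.card_ker_mul_card_of_surjective _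
          (ZMod.weightedSumHom_surjective w hdvd hgcd), Nat.card_pi]
        simp only [Nat.card_zmod]

theorem stmt_10 {n : ℕ} (hn : 1 ≤ n)
    (w : Fin n → ℕ) (hw : ∀ i, 0 < w i)
    (d : ℕ) (hd : d = ∑ i, w i) (hdvd : ∀ i, w i ∣ d)
    (hgcd : Finset.univ.gcd w = 1)
    (M : Set (∀ i : Fin n, ZMod (d / w i)))
    (hM : M = {x | d ∣ ∑ i, w i * (x i).val}) :
    M.Finite ∧ M.ncard * d = ∏ i, (d / w i) :=
  stmt_10_general w d hd hdvd hgcd M hM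
end

section
/- Let R be a commutative ring with unit, let A, B, C, D ∈ R, let α, β ≥ 1 be integers, set g = gcd(α, β), and let f = A·x^α − C and h = B·x^β − D in the polynomial ring R[x]. Let r, s be nonnegative integers with r·α = s·β + g (a Bézout identity). Then the ideal ⟨f, h⟩ of R[x] contains both: (i) x^{sβ} · ( A^r D^s x^{g} − C^r B^s ), and (ii) x^{lcm(α,β)} · ( A^{β/g} D^{α/g} − C^{β/g} B^{α/g} ). -/
/- Statement 15: the Bézout-type lemma for the ideal ⟨Ax^α − C, Bx^β − D⟩
in R[x]. -/

theorem stmt_15 {R : Type*} [CommRing R] (A B c D : R)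
    (α β : ℕ) (hα : 1 ≤ α) (hβ : 1 ≤ β)
    (g : ℕ) (hg : g = Nat.gcd α β)
    (r s : ℕ) (hrs : r * α = s * β + g)
    (f h : Polynomial R)
    (hf : f = Polynomial.C A * Polynomial.X ^ α - Polynomial.C c)
    (hh : h = Polynomial.C B * Polynomial.X ^ β - Polynomial.C D) :
    Polynomial.X ^ (s * β) *
        (Polynomial.C (A ^ r * D ^ s) * Polynomial.X ^ g -
          Polynomial.C (c ^ r * B ^ s)) ∈ Ideal.span {f, h} ∧
    Polynomial.X ^ Nat.lcm α β *
        (Polynomial.C (A ^ (β / g) * D ^ (α / g)) -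
          Polynomial.C (c ^ (β / g) * B ^ (α / g))) ∈ Ideal.span {f, h} := by
  set I := Ideal.span {f, h} with hI
  have hfI : f ∈ I := Ideal.subset_span (by left; rfl)
  have hhI : h ∈ I := Ideal.subset_span (by right; rfl)
  have mem1 : ∀ n : ℕ, Polynomial.C (A ^ n) * Polynomial.X ^ (n * α)
      - Polynomial.C (c ^ n) ∈ I := by
    intro n
    obtain ⟨k, hk⟩ := sub_dvd_pow_sub_pow (Polynomial.C A * Polynomial.X ^ α)
      (Polynomial.C c) n
    have e : Polynomial.C (A ^ n) * Polynomial.X ^ (n * α) - Polynomial.C (c ^ n)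
        = (Polynomial.C A * Polynomial.X ^ α) ^ n - (Polynomial.C c) ^ n := by
      simp only [map_pow]; rw [mul_pow, mul_comm n α, pow_mul]
    rw [e, hk, ← hf]
    exact Ideal.mul_mem_right _ _ hfI
  have mem2 : ∀ n : ℕ, Polynomial.C (B ^ n) * Polynomial.X ^ (n * β)
      - Polynomial.C (D ^ n) ∈ I := by
    intro n
    obtain ⟨k, hk⟩ := sub_dvd_pow_sub_pow (Polynomial.C B * Polynomial.X ^ β)
      (Polynomial.C D) n
    have e : Polynomial.C (B ^ n) * Polynomial.X ^ (n * β) - Polynomial.C (D ^ n)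
        = (Polynomial.C B * Polynomial.X ^ β) ^ n - (Polynomial.C D) ^ n := by
      simp only [map_pow]; rw [mul_pow, mul_comm n β, pow_mul]
    rw [e, hk, ← hh]
    exact Ideal.mul_mem_right _ _ hhI
  constructor
  · have eq1 : Polynomial.X ^ (s * β) *
        (Polynomial.C (A ^ r * D ^ s) * Polynomial.X ^ g -
          Polynomial.C (c ^ r * B ^ s))
        = Polynomial.C (D ^ s) *
            (Polynomial.C (A ^ r) * Polynomial.X ^ (r * α) - Polynomial.C (c ^ r))
          - Polynomial.C (c ^ r) *
            (Polynomial.C (B ^ s) * Polynomial.X ^ (s * β) - Polynomial.C (D ^ s)) := by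
      rw [hrs]
      simp only [map_mul]
      ring
    rw [eq1]
    exact Ideal.sub_mem I (Ideal.mul_mem_left I _ (mem1 r))
      (Ideal.mul_mem_left I _ (mem2 s))
  · have hl1 : (β / g) * α = Nat.lcm α β := by
      rw [hg, Nat.lcm, mul_comm, Nat.mul_div_assoc _ (Nat.gcd_dvd_right α β)]
    have hl2 : (α / g) * β = Nat.lcm α β := by
      rw [hg, Nat.lcm, mul_comm (α / Nat.gcd α β) β, mul_comm α β,
        Nat.mul_div_assoc _ (Nat.gcd_dvd_left α β)]
    have eq2 : Polynomial.X ^ Nat.lcm α β *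
        (Polynomial.C (A ^ (β / g) * D ^ (α / g)) -
          Polynomial.C (c ^ (β / g) * B ^ (α / g)))
        = Polynomial.C (D ^ (α / g)) *
            (Polynomial.C (A ^ (β / g)) * Polynomial.X ^ ((β / g) * α)
              - Polynomial.C (c ^ (β / g)))
          - Polynomial.C (c ^ (β / g)) *
            (Polynomial.C (B ^ (α / g)) * Polynomial.X ^ ((α / g) * β)
              - Polynomial.C (D ^ (α / g))) := by
      rw [hl1, hl2]
      simp only [map_mul]
      ring
    rw [eq2]
    exact Ideal.sub_mem I (Ideal.mul_mem_left I _ (mem1 (β / g)))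
      (Ideal.mul_mem_left I _ (mem2 (α / g)))
end

section
/- In the polynomial ring ℚ[a, x_2,…,x_n], let G = F_a(1, x_2,…,x_n) and let J be the ideal generated by G and the partial derivatives ∂G/∂x_2, …, ∂G/∂x_n (the relative Tjurina ideal of the family in the chart x_1 = 1). Then J contains the polynomial a^{d/γ} · ∏_{i=1}^{k} (β_i w_i)^{β_i w_i/γ} + (−1)^{d/γ − 1} · d^{d/γ}; i.e. the discriminant polynomial of the family lies in the elimination ideal J ∩ ℚ[a]. -/
open MvPolynomial

lemma X_mul_pderiv_X_pow {σ : Type*} [DecidableEq σ] {R : Type*} [CommSemiring R]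
    (j i : σ) (e : ℕ) :
    X j * pderiv j (X i ^ e : MvPolynomial σ R) = (if i = j then (e : MvPolynomial σ R) else 0) * X i ^ e := by
  by_cases h : i = j
  · subst h
    rw [pderiv_pow, pderiv_X_self, mul_one, if_pos rfl]
    cases e with
    | zero => simp
    | succ n => rw [Nat.succ_sub_one]; ring
  · rw [pderiv_pow, pderiv_X_of_ne h, if_neg h]
    ring

lemma X_mul_pderiv_prod {σ : Type*} [DecidableEq σ] {R : Type*} [CommSemiring R]
    (j : σ) (e : σ → ℕ) (s : Finset σ) :
    X j * pderiv j (∏ i ∈ s, X i ^ e i : MvPolynomial σ R)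
      = (if j ∈ s then (e j : MvPolynomial σ R) else 0) * ∏ i ∈ s, X i ^ e i := by
  induction s using Finset.induction_on with
  | empty => simp
  | @insert a s hnotmem ih =>
    rw [Finset.prod_insert hnotmem, pderiv_mul]
    rw [mul_add]
    have h1 : X j * (pderiv j (X a ^ e a) * ∏ i ∈ s, X i ^ e i)
        = ((if a = j then (e a : MvPolynomial σ R) else 0) * X a ^ e a) * ∏ i ∈ s, X i ^ e i := by
      rw [← mul_assoc, X_mul_pderiv_X_pow]
    have h2 : X j * (X a ^ e a * pderiv j (∏ i ∈ s, X i ^ e i))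
        = X a ^ e a * ((if j ∈ s then (e j : MvPolynomial σ R) else 0) * ∏ i ∈ s, X i ^ e i) := by
      rw [← ih]; ring
    rw [h1, h2]
    by_cases ha : a = j
    · have hj : j ∉ s := ha ▸ hnotmem
      rw [if_pos ha, if_neg hj, if_pos (Finset.mem_insert.mpr (Or.inl ha.symm)), ha]
      ring
    · rw [if_neg ha]
      by_cases hs : j ∈ s
      · rw [if_pos hs, if_pos (Finset.mem_insert_of_mem hs)]; ring
      · rw [if_neg hs, if_neg (by simp only [Finset.mem_insert]; tauto)]; ring

set_option maxHeartbeats 1000000 in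
theorem stmt_16 {m k : ℕ} (hk2 : 2 ≤ k) (hkn : k ≤ m + 2)
    (w β : Fin (m + 2) → ℕ) (hw : ∀ i, 0 < w i)
    (hgcd : Finset.univ.gcd w = 1)
    (d : ℕ) (hd : d = ∑ i, w i) (hdvd : ∀ i, w i ∣ d)
    (hβpos : ∀ i : Fin (m + 2), (i : ℕ) < k → 0 < β i)
    (hβ0 : ∀ i : Fin (m + 2), k ≤ (i : ℕ) → β i = 0)
    (hβd : ∑ i, β i * w i = d)
    (γ : ℕ) (hγ : γ = Finset.univ.gcd (fun i => β i * w i))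
    (G : MvPolynomial (Fin (m + 1)) (Polynomial ℚ))
    (hG : G = 1 + (∑ j : Fin (m + 1), X j ^ (d / w j.succ)) +
        C Polynomial.X * ∏ j : Fin (m + 1), X j ^ β j.succ)
    (J : Ideal (MvPolynomial (Fin (m + 1)) (Polynomial ℚ)))
    (hJ : J = Ideal.span ({G} ∪ Set.range (fun j : Fin (m + 1) => pderiv j G))) :
    C (Polynomial.X ^ (d / γ) *
          Polynomial.C (∏ i, ((β i * w i : ℕ) : ℚ) ^ (β i * w i / γ)) +
        Polynomial.C ((-1 : ℚ) ^ (d / γ - 1) * (d : ℚ) ^ (d / γ))) ∈ J := by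
  classical
  have hd0 : 0 < d := by
    have h := Finset.single_le_sum (f := w) (fun i _ => Nat.zero_le _) (Finset.mem_univ 0)
    rw [hd]; exact lt_of_lt_of_le (hw 0) h
  -- definitions of the exponents
  set e : Fin (m + 2) → ℕ := fun i => β i * w i / γ with he
  set D : Fin (m + 1) → ℕ := fun j => d / w j.succ with hDdef
  -- basic arithmetic facts
  have hγdvd : ∀ i, γ ∣ β i * w i := fun i => hγ ▸ Finset.gcd_dvd (Finset.mem_univ i)
  have hγd : γ ∣ d := hβd ▸ Finset.dvd_sum (fun i _ => hγdvd i)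
  have hβ00 : 0 < β 0 := hβpos 0 (by simpa using lt_of_lt_of_le two_pos hk2)
  have hB0 : 0 < β 0 * w 0 := Nat.mul_pos hβ00 (hw 0)
  have hγ0 : 0 < γ := by
    rcases Nat.eq_zero_or_pos γ with h0 | h
    · exfalso
      have := (Finset.gcd_eq_zero_iff.mp (hγ ▸ h0)) 0 (Finset.mem_univ 0)
      omega
    · exact h
  have hγe : ∀ i, γ * e i = β i * w i := fun i => Nat.mul_div_cancel' (hγdvd i)
  have hγdγ : γ * (d / γ) = d := Nat.mul_div_cancel' hγd
  have hdγ0 : 0 < d / γ := by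
    rcases Nat.eq_zero_or_pos (d / γ) with h0 | h
    · exfalso; rw [h0, Nat.mul_zero] at hγdγ; omega
    · exact h
  have hwD : ∀ j : Fin (m + 1), w j.succ * D j = d := fun j => Nat.mul_div_cancel' (hdvd _)
  have hD0 : ∀ j : Fin (m + 1), 0 < D j := by
    intro j
    rcases Nat.eq_zero_or_pos (D j) with h0 | h
    · exfalso; have := hwD j; rw [h0, Nat.mul_zero] at this; omega
    · exact h
  have hsum_e : ∑ i, e i = d / γ := by
    apply Nat.eq_of_mul_eq_mul_left hγ0
    rw [Finset.mul_sum, hγdγ]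
    calc ∑ i, γ * e i = ∑ i, β i * w i := Finset.sum_congr rfl (fun i _ => hγe i)
    _ = d := hβd
  have hDe : ∀ j : Fin (m + 1), D j * e j.succ = d / γ * β j.succ := by
    intro j
    apply Nat.eq_of_mul_eq_mul_left (Nat.mul_pos (hw j.succ) hγ0)
    calc w j.succ * γ * (D j * e j.succ) = (w j.succ * D j) * (γ * e j.succ) := by ring
    _ = d * (β j.succ * w j.succ) := by rw [hwD, hγe]
    _ = w j.succ * γ * (d / γ * β j.succ) := by
        conv_lhs => rw [← hγdγ]
        ring
  -- quotient ring setup (no `set`, to keep atoms syntactically uniform)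
  let q : MvPolynomial (Fin (m + 1)) (Polynomial ℚ) →+*
      MvPolynomial (Fin (m + 1)) (Polynomial ℚ) ⧸ J := Ideal.Quotient.mk J
  let φ : ℚ →+* MvPolynomial (Fin (m + 1)) (Polynomial ℚ) ⧸ J :=
    q.comp ((MvPolynomial.C : Polynomial ℚ →+* _).comp (Polynomial.C : ℚ →+* Polynomial ℚ))
  have hqG : q G = 0 :=
    Ideal.Quotient.eq_zero_iff_mem.mpr
      (hJ ▸ Ideal.subset_span (Set.mem_union_left _ (Set.mem_singleton G)))
  have hqpd : ∀ j : Fin (m + 1), q (pderiv j G) = 0 := fun j =>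
    Ideal.Quotient.eq_zero_iff_mem.mpr
      (hJ ▸ Ideal.subset_span (Set.mem_union_right _ ⟨j, rfl⟩))
  -- key rationals
  have hBne : ((β 0 * w 0 : ℕ) : ℚ) ≠ 0 := Nat.cast_ne_zero.mpr hB0.ne'
  have hdne : (d : ℚ) ≠ 0 := Nat.cast_ne_zero.mpr hd0.ne'
  set c : Fin (m + 1) → ℚ := fun j => -((β j.succ : ℚ) / (D j : ℚ)) with hc
  set r : ℚ := -((d : ℚ) / ((β 0 * w 0 : ℕ) : ℚ)) with hr
  -- Euler-type relation in the polynomial ring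
  have hEuler : ∀ j : Fin (m + 1),
      X j * pderiv j G = (D j : MvPolynomial (Fin (m + 1)) (Polynomial ℚ)) * X j ^ D j +
        (β j.succ : MvPolynomial (Fin (m + 1)) (Polynomial ℚ)) *
          (C Polynomial.X * ∏ i : Fin (m + 1), X i ^ β i.succ) := by
    intro j
    rw [hG]
    rw [map_add, map_add, pderiv_one, pderiv_C_mul, zero_add]
    rw [map_sum]
    rw [mul_add, Finset.mul_sum]
    have h1 : ∀ i : Fin (m + 1),
        X j * pderiv j (X i ^ (d / w i.succ) : MvPolynomial (Fin (m + 1)) (Polynomial ℚ))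
        = (if i = j then ((D i : MvPolynomial (Fin (m + 1)) (Polynomial ℚ))) else 0) * X i ^ D i :=
      fun i => X_mul_pderiv_X_pow j i _
    rw [Finset.sum_congr rfl (fun i _ => h1 i)]
    have h2 : ∑ i : Fin (m + 1),
        (if i = j then ((D i : MvPolynomial (Fin (m + 1)) (Polynomial ℚ))) else 0) * X i ^ D i
        = (D j : MvPolynomial (Fin (m + 1)) (Polynomial ℚ)) * X j ^ D j := by
      simp only [ite_mul, zero_mul]
      rw [Finset.sum_ite_eq' Finset.univ j
        (fun i => (D i : MvPolynomial (Fin (m + 1)) (Polynomial ℚ)) * X i ^ D i)]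
      simp
    rw [h2]
    have h3 : X j * (C Polynomial.X *
          pderiv j (∏ i : Fin (m + 1), X i ^ β i.succ : MvPolynomial (Fin (m + 1)) (Polynomial ℚ)))
        = (β j.succ : MvPolynomial (Fin (m + 1)) (Polynomial ℚ)) *
          (C Polynomial.X * ∏ i : Fin (m + 1), X i ^ β i.succ) := by
      have h4 := X_mul_pderiv_prod (R := Polynomial ℚ) j (fun i => β i.succ) (Finset.univ (α := Fin (m + 1)))
      rw [if_pos (Finset.mem_univ j)] at h4
      calc X j * (C Polynomial.X * pderiv j (∏ i : Fin (m + 1), X i ^ β i.succ))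
          = C Polynomial.X * (X j * pderiv j (∏ i : Fin (m + 1), X i ^ β i.succ)) := by ring
        _ = C Polynomial.X * ((β j.succ : MvPolynomial (Fin (m + 1)) (Polynomial ℚ)) *
              ∏ i : Fin (m + 1), X i ^ β i.succ) := by rw [h4]
        _ = _ := by ring
    rw [h3]
  -- relations in the quotient
  have hRel1 : ∀ j : Fin (m + 1),
      (D j : MvPolynomial (Fin (m + 1)) (Polynomial ℚ) ⧸ J) * q (X j) ^ D j +
      (β j.succ : MvPolynomial (Fin (m + 1)) (Polynomial ℚ) ⧸ J) *
        (q (C Polynomial.X) * q (∏ i : Fin (m + 1), X i ^ β i.succ)) = 0 := by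
    intro j
    have h := congrArg q (hEuler j)
    rw [map_mul, hqpd j] at h
    rw [map_add, map_mul, map_mul, map_mul, map_pow, map_natCast, map_natCast] at h
    linear_combination -h
  have hRel1' : ∀ j : Fin (m + 1), q (X j) ^ D j =
      φ (c j) * (q (C Polynomial.X) * q (∏ i : Fin (m + 1), X i ^ β i.succ)) := by
    intro j
    have hDne : ((D j : ℚ)) ≠ 0 := Nat.cast_ne_zero.mpr (hD0 j).ne'
    have h4 : φ ((D j : ℚ)⁻¹) * (D j : MvPolynomial (Fin (m + 1)) (Polynomial ℚ) ⧸ J) = 1 := by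
      rw [← map_natCast φ (D j), ← map_mul, inv_mul_cancel₀ hDne, map_one]
    have h5 := hRel1 j
    have hφc : φ (c j) = φ ((D j : ℚ)⁻¹) *
        (-((β j.succ : ℕ) : MvPolynomial (Fin (m + 1)) (Polynomial ℚ) ⧸ J)) := by
      have hcj : c j = (D j : ℚ)⁻¹ * (-(β j.succ : ℚ)) := by
        show -((β j.succ : ℚ) / (D j : ℚ)) = _
        field_simp
      rw [hcj, map_mul, map_neg, map_natCast]
    rw [hφc]
    linear_combination φ ((D j : ℚ)⁻¹) * h5 - (q (X j) ^ D j) * h4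
  -- c j in terms of weights
  have hcweights : ∀ j : Fin (m + 1), c j = -(((β j.succ * w j.succ : ℕ) : ℚ) / d) := by
    intro j
    have hcast : (w j.succ : ℚ) * (D j : ℚ) = (d : ℚ) := by exact_mod_cast hwD j
    have hwne : (w j.succ : ℚ) ≠ 0 := Nat.cast_ne_zero.mpr (hw _).ne'
    have hDne : ((D j : ℚ)) ≠ 0 := Nat.cast_ne_zero.mpr (hD0 j).ne'
    show -((β j.succ : ℚ) / (D j : ℚ)) = _
    push_cast
    rw [neg_inj, div_eq_div_iff hDne hdne]
    linear_combination (-(β j.succ : ℚ)) * hcast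
  -- the relation coming from q G = 0
  have hG0 : (1 : MvPolynomial (Fin (m + 1)) (Polynomial ℚ) ⧸ J) +
      (∑ j : Fin (m + 1), q (X j) ^ (d / w j.succ)) +
      q (C Polynomial.X) * q (∏ i : Fin (m + 1), X i ^ β i.succ) = 0 := by
    have h := congrArg q hG
    rw [hqG, map_add, map_add, map_one, map_sum, map_mul] at h
    simp only [map_pow] at h
    exact h.symm
  have hsumc : (∑ j : Fin (m + 1), c j) + 1 = ((β 0 * w 0 : ℕ) : ℚ) / d := by
    have hsplit : (β 0 * w 0) + ∑ j : Fin (m + 1), β j.succ * w j.succ = d := by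
      rw [← hβd]; exact (Fin.sum_univ_succ (fun i : Fin (m + 2) => β i * w i)).symm
    have hcastsplit : ((β 0 * w 0 : ℕ) : ℚ) +
        ∑ j : Fin (m + 1), ((β j.succ * w j.succ : ℕ) : ℚ) = (d : ℚ) := by
      exact_mod_cast hsplit
    rw [Finset.sum_congr rfl (fun j _ => hcweights j)]
    rw [Finset.sum_neg_distrib, ← Finset.sum_div]
    push_cast at hcastsplit ⊢
    field_simp
    linarith [hcastsplit]
  have hrne : r ≠ 0 := by
    rw [hr]; exact neg_ne_zero.mpr (div_ne_zero hdne hBne)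
  have hAMq : q (C Polynomial.X) * q (∏ i : Fin (m + 1), X i ^ β i.succ) = φ r := by
    have h7 : ∑ j : Fin (m + 1), q (X j) ^ (d / w j.succ) =
        φ (∑ j : Fin (m + 1), c j) *
          (q (C Polynomial.X) * q (∏ i : Fin (m + 1), X i ^ β i.succ)) := by
      rw [Finset.sum_congr rfl (fun j _ => hRel1' j), ← Finset.sum_mul, ← map_sum]
    have h6 : (1 : MvPolynomial (Fin (m + 1)) (Polynomial ℚ) ⧸ J) +
        φ (((β 0 * w 0 : ℕ) : ℚ) / d) *
          (q (C Polynomial.X) * q (∏ i : Fin (m + 1), X i ^ β i.succ)) = 0 := by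
      have h8 : φ (((β 0 * w 0 : ℕ) : ℚ) / d) = φ (∑ j : Fin (m + 1), c j) + 1 := by
        rw [← hsumc, map_add, map_one]
      rw [h8]
      linear_combination hG0 - h7
    have h9 : φ ((d : ℚ) / ((β 0 * w 0 : ℕ) : ℚ)) * φ (((β 0 * w 0 : ℕ) : ℚ) / d) = 1 := by
      rw [← map_mul, div_mul_div_comm, mul_comm ((d : ℚ)) (((β 0 * w 0 : ℕ) : ℚ)),
        div_self (mul_ne_zero hBne hdne), map_one]
    have h10 : φ r = -φ ((d : ℚ) / ((β 0 * w 0 : ℕ) : ℚ)) := by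
      rw [hr, map_neg]
    linear_combination (φ ((d : ℚ) / ((β 0 * w 0 : ℕ) : ℚ))) * h6 -
      (q (C Polynomial.X) * q (∏ i : Fin (m + 1), X i ^ β i.succ)) * h9 - h10
  -- raising to powers
  have hMpow : q (∏ i : Fin (m + 1), X i ^ β i.succ) ^ (d / γ) =
      ∏ j : Fin (m + 1), (q (X j) ^ D j) ^ e j.succ := by
    rw [map_prod]
    simp only [map_pow]
    rw [← Finset.prod_pow]
    apply Finset.prod_congr rfl
    intro j _
    rw [← pow_mul, ← pow_mul, hDe j, mul_comm (β j.succ) (d / γ)]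
  have hkey : q (C Polynomial.X) ^ (d / γ) *
      φ ((∏ j : Fin (m + 1), c j ^ e j.succ) * r ^ (∑ j : Fin (m + 1), e j.succ)) =
      φ (r ^ (d / γ)) := by
    have h11 : φ (r ^ (d / γ)) = q (C Polynomial.X) ^ (d / γ) *
        q (∏ i : Fin (m + 1), X i ^ β i.succ) ^ (d / γ) := by
      rw [map_pow, ← hAMq]
      exact mul_pow (q (C Polynomial.X)) (q (∏ i : Fin (m + 1), X i ^ β i.succ)) (d / γ)
    have h12 : ∏ j : Fin (m + 1), (q (X j) ^ D j) ^ e j.succ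
        = ∏ j : Fin (m + 1), (φ (c j) *
            (q (C Polynomial.X) * q (∏ i : Fin (m + 1), X i ^ β i.succ))) ^ e j.succ :=
      Finset.prod_congr rfl (fun j _ => by rw [hRel1' j])
    have h13 : ∏ j : Fin (m + 1), (φ (c j) *
          (q (C Polynomial.X) * q (∏ i : Fin (m + 1), X i ^ β i.succ))) ^ e j.succ
        = (∏ j : Fin (m + 1), φ (c j) ^ e j.succ) *
          (q (C Polynomial.X) * q (∏ i : Fin (m + 1), X i ^ β i.succ)) ^
            (∑ j : Fin (m + 1), e j.succ) := by
      rw [← Finset.prod_pow_eq_pow_sum Finset.univ (fun j : Fin (m + 1) => e j.succ)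
        (q (C Polynomial.X) * q (∏ i : Fin (m + 1), X i ^ β i.succ)),
        ← Finset.prod_mul_distrib]
      refine Finset.prod_congr rfl (fun j _ => ?_)
      ring
    have h14 : (∏ j : Fin (m + 1), φ (c j) ^ e j.succ)
        = φ (∏ j : Fin (m + 1), c j ^ e j.succ) := by
      rw [map_prod]
      exact Finset.prod_congr rfl (fun j _ => (map_pow φ _ _).symm)
    rw [h11, hMpow, h12, h13, h14, hAMq, ← map_pow φ, ← map_mul φ]
  -- final rational arithmetic
  have he0s : e 0 + (∑ j : Fin (m + 1), e j.succ) = d / γ := by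
    rw [← hsum_e]; exact (Fin.sum_univ_succ e).symm
  have hcr : ∀ j : Fin (m + 1), c j =
      ((β j.succ * w j.succ : ℕ) : ℚ) / (((β 0 * w 0 : ℕ) : ℚ) * r) := by
    intro j
    rw [hcweights j, hr]
    rw [show ((β 0 * w 0 : ℕ) : ℚ) * -((d : ℚ) / ((β 0 * w 0 : ℕ) : ℚ)) = -(d : ℚ) by
      rw [mul_neg, mul_comm ((β 0 * w 0 : ℕ) : ℚ) ((d : ℚ) / ((β 0 * w 0 : ℕ) : ℚ)),
        div_mul_cancel₀ _ hBne]]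
    rw [div_neg]
  have hQ1 : ((∏ j : Fin (m + 1), c j ^ e j.succ) * r ^ (∑ j : Fin (m + 1), e j.succ)) *
      ((β 0 * w 0 : ℕ) : ℚ) ^ (d / γ) = ∏ i : Fin (m + 2), ((β i * w i : ℕ) : ℚ) ^ e i := by
    have hstep1 : ∏ j : Fin (m + 1), c j ^ e j.succ
        = ∏ j : Fin (m + 1), (((β j.succ * w j.succ : ℕ) : ℚ) ^ e j.succ /
            ((((β 0 * w 0 : ℕ) : ℚ) * r)) ^ e j.succ) :=
      Finset.prod_congr rfl (fun j _ => by rw [hcr j, div_pow])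
    have hstep2 : ∏ j : Fin (m + 1), (((β j.succ * w j.succ : ℕ) : ℚ) ^ e j.succ /
          ((((β 0 * w 0 : ℕ) : ℚ) * r)) ^ e j.succ)
        = (∏ j : Fin (m + 1), ((β j.succ * w j.succ : ℕ) : ℚ) ^ e j.succ) /
          ((((β 0 * w 0 : ℕ) : ℚ) * r)) ^ (∑ j : Fin (m + 1), e j.succ) := by
      rw [Finset.prod_div_distrib, Finset.prod_pow_eq_pow_sum]
    have hstep3 : ∏ i : Fin (m + 2), ((β i * w i : ℕ) : ℚ) ^ e i
        = ((β 0 * w 0 : ℕ) : ℚ) ^ e 0 *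
          ∏ j : Fin (m + 1), ((β j.succ * w j.succ : ℕ) : ℚ) ^ e j.succ :=
      Fin.prod_univ_succ (fun i : Fin (m + 2) => ((β i * w i : ℕ) : ℚ) ^ e i)
    have hBrne : (((β 0 * w 0 : ℕ) : ℚ) * r) ^ (∑ j : Fin (m + 1), e j.succ) ≠ 0 :=
      pow_ne_zero _ (mul_ne_zero hBne hrne)
    rw [hstep1, hstep2, hstep3]
    rw [show d / γ = e 0 + (∑ j : Fin (m + 1), e j.succ) from he0s.symm, pow_add]
    rw [mul_pow ((β 0 * w 0 : ℕ) : ℚ) r, div_mul_eq_mul_div, div_mul_eq_mul_div,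
      div_eq_iff (mul_ne_zero (pow_ne_zero _ hBne) (pow_ne_zero _ hrne))]
    ring
  have hQ2 : r ^ (d / γ) * ((β 0 * w 0 : ℕ) : ℚ) ^ (d / γ) =
      (-1 : ℚ) ^ (d / γ) * (d : ℚ) ^ (d / γ) := by
    have hrB : r * ((β 0 * w 0 : ℕ) : ℚ) = -(d : ℚ) := by
      rw [hr, neg_mul, div_mul_cancel₀ _ hBne]
    rw [← mul_pow, hrB, neg_pow]
  have hσ2 : (-1 : ℚ) ^ (d / γ) * (d : ℚ) ^ (d / γ) +
      (-1 : ℚ) ^ (d / γ - 1) * (d : ℚ) ^ (d / γ) = 0 := by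
    obtain ⟨t, ht⟩ : ∃ t, d / γ = t + 1 := ⟨d / γ - 1, (Nat.succ_pred_eq_of_pos hdγ0).symm⟩
    rw [ht, Nat.add_sub_cancel, pow_succ]
    ring
  -- conclusion
  rw [← Ideal.Quotient.eq_zero_iff_mem]
  have hgoal : (Ideal.Quotient.mk J) (C (Polynomial.X ^ (d / γ) *
          Polynomial.C (∏ i, ((β i * w i : ℕ) : ℚ) ^ (β i * w i / γ)) +
        Polynomial.C ((-1 : ℚ) ^ (d / γ - 1) * (d : ℚ) ^ (d / γ))))
      = q (C Polynomial.X) ^ (d / γ) * φ (∏ i : Fin (m + 2), ((β i * w i : ℕ) : ℚ) ^ e i) +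
        φ ((-1 : ℚ) ^ (d / γ - 1) * (d : ℚ) ^ (d / γ)) := by
    show q _ = _
    rw [map_add, map_mul, map_pow, map_add, map_mul, map_pow]
    rfl
  rw [hgoal]
  have hkey2 : q (C Polynomial.X) ^ (d / γ) *
      φ (∏ i : Fin (m + 2), ((β i * w i : ℕ) : ℚ) ^ e i) =
      φ ((-1 : ℚ) ^ (d / γ) * (d : ℚ) ^ (d / γ)) := by
    calc q (C Polynomial.X) ^ (d / γ) * φ (∏ i : Fin (m + 2), ((β i * w i : ℕ) : ℚ) ^ e i)
        = q (C Polynomial.X) ^ (d / γ) *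
            (φ ((∏ j : Fin (m + 1), c j ^ e j.succ) * r ^ (∑ j : Fin (m + 1), e j.succ)) *
              φ (((β 0 * w 0 : ℕ) : ℚ) ^ (d / γ))) := by
          rw [← map_mul φ, hQ1]
      _ = (q (C Polynomial.X) ^ (d / γ) *
            φ ((∏ j : Fin (m + 1), c j ^ e j.succ) * r ^ (∑ j : Fin (m + 1), e j.succ))) *
              φ (((β 0 * w 0 : ℕ) : ℚ) ^ (d / γ)) := by ring
      _ = φ (r ^ (d / γ)) * φ (((β 0 * w 0 : ℕ) : ℚ) ^ (d / γ)) := by rw [hkey]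
      _ = φ ((-1 : ℚ) ^ (d / γ) * (d : ℚ) ^ (d / γ)) := by rw [← map_mul φ, hQ2]
  rw [hkey2, ← map_add, hσ2, map_zero]
end

section
/- Let F(x,y,z,u,v) = x^8 + y^8 + z^4 + u^4 + v^4 + a·xyzuv + b·x^4 y^4 with parameters a, b ∈ ℂ (the two-parameter family of Calabi–Yau threefolds in the weighted projective space P(1,1,2,2,2)). There exists a point (x,y,z,u,v) ∈ ℂ^5, not equal to (0,0,0,0,0), at which all five partial derivatives of F vanish, if and only if (b − 2)(b + 2)(a^4 − 256b + 512)(a^4 − 256b − 512) = 0. -/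
/- Statement 17: discriminant of the two-parameter family of Calabi–Yau
threefolds in P(1,1,2,2,2):
F = x^8 + y^8 + z^4 + u^4 + v^4 + a·xyzuv + b·x^4 y^4. -/

noncomputable def F11222 (a b : ℂ) (p : Fin 5 → ℂ) : ℂ :=
  p 0 ^ 8 + p 1 ^ 8 + p 2 ^ 4 + p 3 ^ 4 + p 4 ^ 4 +
    a * (p 0 * p 1 * p 2 * p 3 * p 4) + b * (p 0 ^ 4 * p 1 ^ 4)

private lemma shape1 (a b C M N x : ℂ) :
    deriv (fun t : ℂ => t ^ 8 + C + a * (t * M) + b * (t ^ 4 * N)) x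
      = 8 * x ^ 7 + a * M + 4 * b * (x ^ 3 * N) := by
  have H : HasDerivAt (fun t : ℂ => t ^ 8 + C + a * (t * M) + b * (t ^ 4 * N))
      ((8:ℕ) * x ^ (8-1) + a * (1 * M) + b * ((4:ℕ) * x ^ (4-1) * N)) x :=
    (((hasDerivAt_pow 8 x).add_const C).add
      (((hasDerivAt_id' x).mul_const M).const_mul a)).add
      (((hasDerivAt_pow 4 x).mul_const N).const_mul b)
  rw [H.deriv]; push_cast; ring

private lemma shape2 (a C M x : ℂ) :
    deriv (fun t : ℂ => t ^ 4 + C + a * (t * M)) x = 4 * x ^ 3 + a * M := by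
  have H : HasDerivAt (fun t : ℂ => t ^ 4 + C + a * (t * M))
      ((4:ℕ) * x ^ (4-1) + a * (1 * M)) x :=
    ((hasDerivAt_pow 4 x).add_const C).add
      (((hasDerivAt_id' x).mul_const M).const_mul a)
  rw [H.deriv]; push_cast; ring

private lemma system_iff (a b : ℂ) (p : Fin 5 → ℂ) :
    (∀ i : Fin 5, deriv (fun t : ℂ => F11222 a b (Function.update p i t)) (p i) = 0) ↔
      (8 * p 0 ^ 7 + a * (p 1 * p 2 * p 3 * p 4) + 4 * b * (p 0 ^ 3 * p 1 ^ 4) = 0 ∧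
       8 * p 1 ^ 7 + a * (p 0 * p 2 * p 3 * p 4) + 4 * b * (p 1 ^ 3 * p 0 ^ 4) = 0 ∧
       4 * p 2 ^ 3 + a * (p 0 * p 1 * p 3 * p 4) = 0 ∧
       4 * p 3 ^ 3 + a * (p 0 * p 1 * p 2 * p 4) = 0 ∧
       4 * p 4 ^ 3 + a * (p 0 * p 1 * p 2 * p 3) = 0) := by
  have e0 : (fun t : ℂ => F11222 a b (Function.update p 0 t))
      = fun t => t ^ 8 + (p 1 ^ 8 + p 2 ^ 4 + p 3 ^ 4 + p 4 ^ 4)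
          + a * (t * (p 1 * p 2 * p 3 * p 4)) + b * (t ^ 4 * p 1 ^ 4) := by
    funext t; simp [F11222, Function.update]; ring
  have e1 : (fun t : ℂ => F11222 a b (Function.update p 1 t))
      = fun t => t ^ 8 + (p 0 ^ 8 + p 2 ^ 4 + p 3 ^ 4 + p 4 ^ 4)
          + a * (t * (p 0 * p 2 * p 3 * p 4)) + b * (t ^ 4 * p 0 ^ 4) := by
    funext t; simp [F11222, Function.update]; ring
  have e2 : (fun t : ℂ => F11222 a b (Function.update p 2 t))
      = fun t => t ^ 4 + (p 0 ^ 8 + p 1 ^ 8 + p 3 ^ 4 + p 4 ^ 4 + b * (p 0 ^ 4 * p 1 ^ 4))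
          + a * (t * (p 0 * p 1 * p 3 * p 4)) := by
    funext t; simp [F11222, Function.update]; ring
  have e3 : (fun t : ℂ => F11222 a b (Function.update p 3 t))
      = fun t => t ^ 4 + (p 0 ^ 8 + p 1 ^ 8 + p 2 ^ 4 + p 4 ^ 4 + b * (p 0 ^ 4 * p 1 ^ 4))
          + a * (t * (p 0 * p 1 * p 2 * p 4)) := by
    funext t; simp [F11222, Function.update]; ring
  have e4 : (fun t : ℂ => F11222 a b (Function.update p 4 t))
      = fun t => t ^ 4 + (p 0 ^ 8 + p 1 ^ 8 + p 2 ^ 4 + p 3 ^ 4 + b * (p 0 ^ 4 * p 1 ^ 4))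
          + a * (t * (p 0 * p 1 * p 2 * p 3)) := by
    funext t; simp [F11222, Function.update]; ring
  constructor
  · intro h
    refine ⟨?_, ?_, ?_, ?_, ?_⟩
    · have := h 0; rw [e0, shape1] at this; linear_combination this
    · have := h 1; rw [e1, shape1] at this; linear_combination this
    · have := h 2; rw [e2, shape2] at this; linear_combination this
    · have := h 3; rw [e3, shape2] at this; linear_combination this
    · have := h 4; rw [e4, shape2] at this; linear_combination this
  · rintro ⟨h1, h2, h3, h4, h5⟩ i
    fin_cases i
    · show deriv (fun t : ℂ => F11222 a b (Function.update p 0 t)) (p 0) = 0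
      rw [e0, shape1]; linear_combination h1
    · show deriv (fun t : ℂ => F11222 a b (Function.update p 1 t)) (p 1) = 0
      rw [e1, shape1]; linear_combination h2
    · show deriv (fun t : ℂ => F11222 a b (Function.update p 2 t)) (p 2) = 0
      rw [e2, shape2]; linear_combination h3
    · show deriv (fun t : ℂ => F11222 a b (Function.update p 3 t)) (p 3) = 0
      rw [e3, shape2]; linear_combination h4
    · show deriv (fun t : ℂ => F11222 a b (Function.update p 4 t)) (p 4) = 0
      rw [e4, shape2]; linear_combination h5

private lemma deg_case (b x y : ℂ) (hx : x ≠ 0) (hy : y ≠ 0)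
    (h1 : 8 * x ^ 7 + 4 * b * (x ^ 3 * y ^ 4) = 0)
    (h2 : 8 * y ^ 7 + 4 * b * (y ^ 3 * x ^ 4) = 0) :
    (b - 2) * (b + 2) = 0 := by
  have h1' : 8 * x ^ 4 + 4 * b * y ^ 4 = 0 := by
    have hf : x ^ 3 * (8 * x ^ 4 + 4 * b * y ^ 4) = 0 := by linear_combination h1
    rcases mul_eq_zero.mp hf with h | h
    · exact absurd (by simpa using h) hx
    · exact h
  have h2' : 8 * y ^ 4 + 4 * b * x ^ 4 = 0 := by
    have hf : y ^ 3 * (8 * y ^ 4 + 4 * b * x ^ 4) = 0 := by linear_combination h2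
    rcases mul_eq_zero.mp hf with h | h
    · exact absurd (by simpa using h) hy
    · exact h
  have hfac : (b - 2) * (b + 2) * (16 * (x ^ 4 * y ^ 4)) = 0 := by
    linear_combination 4 * b * x ^ 4 * h1' - 8 * x ^ 4 * h2'
  rcases mul_eq_zero.mp hfac with h | h
  · exact h
  · simp [hx, hy] at h

private lemma fwd (a b x y z u v : ℂ)
    (hne : ¬(x = 0 ∧ y = 0 ∧ z = 0 ∧ u = 0 ∧ v = 0))
    (h1 : 8 * x ^ 7 + a * (y * z * u * v) + 4 * b * (x ^ 3 * y ^ 4) = 0)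
    (h2 : 8 * y ^ 7 + a * (x * z * u * v) + 4 * b * (y ^ 3 * x ^ 4) = 0)
    (h3 : 4 * z ^ 3 + a * (x * y * u * v) = 0)
    (h4 : 4 * u ^ 3 + a * (x * y * z * v) = 0)
    (h5 : 4 * v ^ 3 + a * (x * y * z * u) = 0) :
    (b - 2) * (b + 2) * (a ^ 4 - 256 * b + 512) * (a ^ 4 - 256 * b - 512) = 0 := by
  by_cases hx : x = 0
  · subst hx
    have hz : z = 0 := by simpa using (show z ^ 3 = 0 by linear_combination h3 / 4)
    have hu : u = 0 := by simpa using (show u ^ 3 = 0 by linear_combination h4 / 4)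
    have hv : v = 0 := by simpa using (show v ^ 3 = 0 by linear_combination h5 / 4)
    have hy : y = 0 := by
      have : y ^ 7 = 0 := by subst hz hu hv; linear_combination h2 / 8
      simpa using this
    exact absurd ⟨rfl, hy, hz, hu, hv⟩ hne
  by_cases hy : y = 0
  · subst hy
    have hz : z = 0 := by simpa using (show z ^ 3 = 0 by linear_combination h3 / 4)
    have hu : u = 0 := by simpa using (show u ^ 3 = 0 by linear_combination h4 / 4)
    have hv : v = 0 := by simpa using (show v ^ 3 = 0 by linear_combination h5 / 4)
    have hx' : x = 0 := by
      have : x ^ 7 = 0 := by subst hz hu hv; linear_combination h1 / 8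
      simpa using this
    exact absurd hx' hx
  by_cases hz : z = 0
  · subst hz
    have hu : u = 0 := by simpa using (show u ^ 3 = 0 by linear_combination h4 / 4)
    have hv : v = 0 := by simpa using (show v ^ 3 = 0 by linear_combination h5 / 4)
    subst hu hv
    have hb := deg_case b x y hx hy (by linear_combination h1) (by linear_combination h2)
    linear_combination (a ^ 4 - 256 * b + 512) * (a ^ 4 - 256 * b - 512) * hb
  by_cases hu : u = 0
  · subst hu
    have hz' : z = 0 := by simpa using (show z ^ 3 = 0 by linear_combination h3 / 4)
    exact absurd hz' hz
  by_cases hv : v = 0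
  · subst hv
    have hz' : z = 0 := by simpa using (show z ^ 3 = 0 by linear_combination h3 / 4)
    exact absurd hz' hz
  have s1 : 16 * (z ^ 3 * u ^ 3) = a ^ 2 * (x ^ 2 * y ^ 2 * z * u * v ^ 2) := by
    linear_combination 4 * u ^ 3 * h3 - a * x * y * u * v * h4
  have s2 : 64 * (z ^ 3 * u ^ 3 * v ^ 3) = -(a ^ 3 * (x ^ 3 * y ^ 3 * z ^ 2 * u ^ 2 * v ^ 2)) := by
    linear_combination 4 * v ^ 3 * s1 + a ^ 2 * x ^ 2 * y ^ 2 * z * u * v ^ 2 * h5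
  have hfac : (a ^ 3 * (x ^ 3 * y ^ 3) + 64 * (z * u * v)) * (z ^ 2 * u ^ 2 * v ^ 2) = 0 := by
    linear_combination s2
  have hq : a ^ 3 * (x ^ 3 * y ^ 3) + 64 * (z * u * v) = 0 := by
    rcases mul_eq_zero.mp hfac with h | h
    · exact h
    · simp [hz, hu, hv] at h
  have hq2 : 64 * (a * (x * y * z * u * v)) = -(a ^ 4 * (x ^ 4 * y ^ 4)) := by
    linear_combination a * x * y * hq
  have e1 : 8 * x ^ 8 + a * (x * y * z * u * v) + 4 * b * (x ^ 4 * y ^ 4) = 0 := by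
    linear_combination x * h1
  have e2 : 8 * y ^ 8 + a * (x * y * z * u * v) + 4 * b * (x ^ 4 * y ^ 4) = 0 := by
    linear_combination y * h2
  have hX : 512 * x ^ 8 = (a ^ 4 - 256 * b) * (x ^ 4 * y ^ 4) := by
    linear_combination 64 * e1 - hq2
  have hY : 512 * y ^ 8 = (a ^ 4 - 256 * b) * (x ^ 4 * y ^ 4) := by
    linear_combination 64 * e2 - hq2
  have hfac2 : ((a ^ 4 - 256 * b) - 512) * ((a ^ 4 - 256 * b) + 512) * (x ^ 8 * y ^ 8) = 0 := by
    linear_combination (-(512 * y ^ 8)) * hX - ((a ^ 4 - 256 * b) * (x ^ 4 * y ^ 4)) * hY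
  have hd : ((a ^ 4 - 256 * b) - 512) * ((a ^ 4 - 256 * b) + 512) = 0 := by
    rcases mul_eq_zero.mp hfac2 with h | h
    · exact h
    · simp [hx, hy] at h
  linear_combination (b - 2) * (b + 2) * hd

theorem stmt_17 (a b : ℂ) :
    (∃ p : Fin 5 → ℂ, p ≠ 0 ∧ ∀ i : Fin 5,
        deriv (fun t : ℂ => F11222 a b (Function.update p i t)) (p i) = 0) ↔
      (b - 2) * (b + 2) * (a ^ 4 - 256 * b + 512) * (a ^ 4 - 256 * b - 512) = 0 := by
  constructor
  · rintro ⟨p, hp, h⟩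
    rw [system_iff] at h
    obtain ⟨h1, h2, h3, h4, h5⟩ := h
    refine fwd a b (p 0) (p 1) (p 2) (p 3) (p 4) ?_ h1 h2 h3 h4 h5
    rintro ⟨e0, e1', e2', e3', e4'⟩
    apply hp
    funext i
    fin_cases i
    · exact e0
    · exact e1'
    · exact e2'
    · exact e3'
    · exact e4'
  · intro hd
    rcases mul_eq_zero.mp hd with h | hc4
    rcases mul_eq_zero.mp h with h | hc3
    rcases mul_eq_zero.mp h with hc1 | hc2
    · -- b = 2
      obtain ⟨ζ, hζ⟩ := IsAlgClosed.exists_pow_nat_eq (-1 : ℂ) (n := 4) (by norm_num)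
      refine ⟨![ζ, 1, 0, 0, 0], ?_, ?_⟩
      · intro h0
        have := congrFun h0 1
        simp at this
      · rw [system_iff]
        simp only [Matrix.cons_val_zero, Matrix.cons_val_one, Matrix.head_cons,
          Matrix.cons_val_two, Matrix.tail_cons, Matrix.cons_val_three, Matrix.cons_val_four]
        refine ⟨?_, ?_, by ring, by ring, by ring⟩
        · linear_combination 8 * ζ ^ 3 * hζ + 4 * ζ ^ 3 * hc1
        · linear_combination 4 * b * hζ - 4 * hc1
    · -- b = -2
      refine ⟨![1, 1, 0, 0, 0], ?_, ?_⟩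
      · intro h0
        have := congrFun h0 1
        simp at this
      · rw [system_iff]
        simp only [Matrix.cons_val_zero, Matrix.cons_val_one, Matrix.head_cons,
          Matrix.cons_val_two, Matrix.tail_cons, Matrix.cons_val_three, Matrix.cons_val_four]
        refine ⟨?_, ?_, by ring, by ring, by ring⟩
        · linear_combination 4 * hc2
        · linear_combination 4 * hc2
    · -- a^4 - 256 b + 512 = 0
      obtain ⟨ζ, hζ⟩ := IsAlgClosed.exists_pow_nat_eq (-1 : ℂ) (n := 4) (by norm_num)
      refine ⟨![ζ, 1, -(a * ζ) / 4, -(a * ζ) / 4, -(a * ζ) / 4], ?_, ?_⟩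
      · intro h0
        have := congrFun h0 1
        simp at this
      · rw [system_iff]
        simp only [Matrix.cons_val_zero, Matrix.cons_val_one, Matrix.head_cons,
          Matrix.cons_val_two, Matrix.tail_cons, Matrix.cons_val_three, Matrix.cons_val_four]
        refine ⟨?_, ?_, by ring, by ring, by ring⟩
        · linear_combination 8 * ζ ^ 3 * hζ - (ζ ^ 3 / 64) * hc3
        · linear_combination (4 * b - a ^ 4 / 64) * hζ + hc3 / 64
    · -- a^4 - 256 b - 512 = 0
      refine ⟨![1, 1, -a / 4, -a / 4, -a / 4], ?_, ?_⟩
      · intro h0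
        have := congrFun h0 1
        simp at this
      · rw [system_iff]
        simp only [Matrix.cons_val_zero, Matrix.cons_val_one, Matrix.head_cons,
          Matrix.cons_val_two, Matrix.tail_cons, Matrix.cons_val_three, Matrix.cons_val_four]
        refine ⟨?_, ?_, by ring, by ring, by ring⟩
        · linear_combination -hc4 / 64
        · linear_combination -hc4 / 64
end
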